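/- arXiv:1609.08935 — 8 statements merged into one kernel-verified Lean document; each statement's English description precedes it below -/
import Mathlib

section
/- Let n = 2^m - 1 with r+1 dividing n and r even, and let C be the binary cyclic code with check polynomial h(x) = Σ_{i=0}^{r} x^{in/(r+1)}. Then C has minimum Hamming distance exactly 2; in particular, the word with ones exactly at positions 0 and n/(r+1) is a codeword of C. -/
open Polynomial

/-- The polynomial associated with a binary word. -/
noncomputable def wordToPoly {n : ℕ} (c : Fin n → ZMod 2) : Polynomial (ZMod 2) :=
  ∑ i : Fin n, Polynomial.C (c i) * Polynomial.X ^ (i : ℕ)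

/-- The binary cyclic code of length `n = 2^m - 1` with check polynomial
`h(x) = Σ_{i=0}^{r} x^{in/(r+1)}` has minimum Hamming distance exactly `2`;
in particular the word with ones exactly at positions `0` and `n/(r+1)` is a
codeword. -/
theorem check_polynomial_code_distance_two
    (m r : ℕ) (hm : 0 < m) (hr : Even r) (hr0 : 0 < r)
    (hdiv : (r + 1) ∣ (2 ^ m - 1))
    (C : Set (Fin (2 ^ m - 1) → ZMod 2))
    (hC : ∀ c, c ∈ C ↔
      ((X : Polynomial (ZMod 2)) ^ (2 ^ m - 1) - 1) ∣
        (wordToPoly c * ∑ i ∈ Finset.range (r + 1),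
          (X : Polynomial (ZMod 2)) ^ (i * ((2 ^ m - 1) / (r + 1))))) :
    (∀ c ∈ C, c ≠ 0 → 2 ≤ hammingNorm c) ∧
    (fun i : Fin (2 ^ m - 1) =>
        if (i : ℕ) = 0 ∨ (i : ℕ) = (2 ^ m - 1) / (r + 1) then (1 : ZMod 2) else 0) ∈ C ∧
    hammingNorm (fun i : Fin (2 ^ m - 1) =>
        if (i : ℕ) = 0 ∨ (i : ℕ) = (2 ^ m - 1) / (r + 1) then (1 : ZMod 2) else 0) = 2 := by
  set n : ℕ := 2 ^ m - 1 with hn_def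
  set k : ℕ := n / (r + 1) with hk_def
  have h2m : 2 ≤ 2 ^ m := by
    calc 2 = 2 ^ 1 := by norm_num
    _ ≤ 2 ^ m := Nat.pow_le_pow_right (by norm_num) hm
  have hn : 0 < n := by omega
  have hnk : n = (r + 1) * k := (Nat.mul_div_cancel' hdiv).symm
  have hk0 : 0 < k := by
    rcases Nat.eq_zero_or_pos k with h | h
    · rw [h, mul_zero] at hnk; omega
    · exact h
  have hkn : k < n := by nlinarith
  set h : Polynomial (ZMod 2) :=
    ∑ i ∈ Finset.range (r + 1), (X : Polynomial (ZMod 2)) ^ (i * k) with hh_def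
  -- key identity : (X^k - 1) * h = X^n - 1
  have hgeom : (X ^ k - 1 : Polynomial (ZMod 2)) * h = X ^ n - 1 := by
    have hsum : h = ∑ i ∈ Finset.range (r + 1), ((X : Polynomial (ZMod 2)) ^ k) ^ i := by
      rw [hh_def]
      refine Finset.sum_congr rfl fun i _ => ?_
      rw [← pow_mul, mul_comm]
    rw [hsum, mul_comm, geom_sum_mul, ← pow_mul, mul_comm k, ← hnk]
  have hdegXn : (X ^ n - 1 : Polynomial (ZMod 2)).natDegree = n := by
    rw [show ((1 : Polynomial (ZMod 2)) = Polynomial.C 1) from (map_one _).symm, natDegree_X_pow_sub_C]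
  have hcoprime : IsCoprime (X ^ n - 1 : Polynomial (ZMod 2)) X := by
    refine ⟨-1, X ^ (n - 1), ?_⟩
    have hx : (X : Polynomial (ZMod 2)) ^ (n - 1) * X = X ^ n := by
      rw [← pow_succ]
      congr 1
      omega
    rw [hx]
    ring
  have hne : h ≠ 0 := by
    intro hcontra
    have hc0 : h.coeff 0 = 1 := by
      rw [hh_def, finset_sum_coeff]
      rw [Finset.sum_eq_single 0]
      · simp
      · intro i hi hine
        rw [coeff_X_pow, if_neg (fun hcon => (Nat.mul_ne_zero hine hk0.ne') hcon.symm)]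
      · simp
    rw [hcontra] at hc0
    simp at hc0
  have hdeg : h.natDegree < n := by
    have hle : h.natDegree ≤ r * k := by
      rw [hh_def]
      refine Polynomial.natDegree_sum_le_of_forall_le _ _ fun i hi => ?_
      rw [Polynomial.natDegree_X_pow]
      have : i ≤ r := by
        simp only [Finset.mem_range] at hi; omega
      exact Nat.mul_le_mul_right k this
    nlinarith
  have hi0k : (⟨0, hn⟩ : Fin n) ≠ ⟨k, hkn⟩ := by
    simp only [ne_eq, Fin.mk.injEq]
    omega
  refine ⟨?_, ?_, ?_⟩
  · -- no nonzero codeword of weight < 2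
    intro c hc hc0
    by_contra hlt
    push_neg at hlt
    have h1 : hammingNorm c = 1 := by
      have := hammingNorm_pos_iff.mpr hc0
      omega
    rw [hammingNorm, Finset.card_eq_one] at h1
    obtain ⟨j, hj⟩ := h1
    have hcj : ∀ i, c i ≠ 0 ↔ i = j := by
      intro i
      have := Finset.ext_iff.mp hj i
      simpa using this
    have hcj1 : c j = 1 := by
      have hne0 : c j ≠ 0 := (hcj j).mpr rfl
      have hall : ∀ a : ZMod 2, a ≠ 0 → a = 1 := by decide
      exact hall _ hne0
    have hwp : wordToPoly c = X ^ (j : ℕ) := by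
      rw [wordToPoly, Finset.sum_eq_single j]
      · rw [hcj1]; simp
      · intro i _ hine
        have : c i = 0 := by
          by_contra hcontra
          exact hine ((hcj i).mp hcontra)
        rw [this]; simp
      · simp
    have hdvd := (hC c).mp hc
    rw [hwp] at hdvd
    have hdvdh : (X ^ n - 1 : Polynomial (ZMod 2)) ∣ h := by
      refine (hcoprime.pow_right (n := (j : ℕ))).dvd_of_dvd_mul_right ?_
      rwa [mul_comm]
    have := Polynomial.eq_zero_of_dvd_of_natDegree_lt hdvdh (by rw [hdegXn]; exact hdeg)
    exact hne this
  · -- the word 1 + X^k is a codeword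
    rw [hC]
    have hw : wordToPoly (fun i : Fin n =>
        if (i : ℕ) = 0 ∨ (i : ℕ) = k then (1 : ZMod 2) else 0) = X ^ k - 1 := by
      rw [wordToPoly]
      have hterm : ∀ i : Fin n,
          Polynomial.C (if (i : ℕ) = 0 ∨ (i : ℕ) = k then (1 : ZMod 2) else 0) * X ^ (i : ℕ)
          = (if i = ⟨0, hn⟩ then (X : Polynomial (ZMod 2)) ^ (0 : ℕ) else 0)
            + (if i = ⟨k, hkn⟩ then (X : Polynomial (ZMod 2)) ^ k else 0) := by
        intro i
        by_cases h1 : (i : ℕ) = 0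
        · have hi : i = ⟨0, hn⟩ := Fin.ext h1
          subst hi
          simp only [if_pos (Or.inl rfl), if_pos rfl, if_neg hi0k, map_one, one_mul, add_zero]
          simp
        · by_cases h2 : (i : ℕ) = k
          · have hi : i = ⟨k, hkn⟩ := Fin.ext h2
            subst hi
            simp only [if_pos (Or.inr rfl), if_pos rfl, if_neg (Ne.symm hi0k), map_one, one_mul,
              zero_add]
            simp
          · have hne1 : i ≠ ⟨0, hn⟩ := fun hcon => h1 (by rw [hcon])
            have hne2 : i ≠ ⟨k, hkn⟩ := fun hcon => h2 (by rw [hcon])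
            rw [if_neg (by tauto), if_neg hne1, if_neg hne2]
            simp
      rw [Finset.sum_congr rfl fun i _ => hterm i, Finset.sum_add_distrib,
        Finset.sum_ite_eq' Finset.univ, Finset.sum_ite_eq' Finset.univ]
      simp only [Finset.mem_univ, if_pos, pow_zero]
      rw [CharTwo.sub_eq_add]
      ring
    rw [hw, hgeom]
  · -- the weight of 1 + X^k is 2
    rw [hammingNorm]
    have hfilt : ({i : Fin n | (fun i : Fin n =>
        if (i : ℕ) = 0 ∨ (i : ℕ) = k then (1 : ZMod 2) else 0) i ≠ 0} :
        Finset (Fin n)) = {⟨0, hn⟩, ⟨k, hkn⟩} := by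
      ext i
      simp only [Finset.mem_filter, Finset.mem_univ, true_and, ne_eq, Finset.mem_insert,
        Finset.mem_singleton, Fin.ext_iff]
      by_cases hP : (i : ℕ) = 0 ∨ (i : ℕ) = k
      · simp only [if_pos hP, one_ne_zero, not_false_iff, true_iff]
        exact hP
      · simp only [if_neg hP]
        simp only [not_or] at hP
        simp [hP.1, hP.2]
    rw [hfilt]
    exact Finset.card_pair hi0k
end

section
/- Let C be the binary cyclic code of length n = 2^m - 1 (m even, m > 2) whose generator polynomial has zeroes α^{3j} for all j = 0,...,n/3-1 together with the cyclotomic coset of α. Then the minimum distance of C is at least 6. -/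
/-- The binary cyclic code of length `n = 2^m - 1` (`m` even, `m > 2`) whose
generator polynomial has zeroes `α^{3j}`, `j = 0, …, n/3 - 1`, together with
the cyclotomic coset of `α`, has minimum Hamming distance at least `6`. -/
theorem cyclic_lrc_d6_distance
    (m : ℕ) (hm : Even m) (hm2 : 2 < m)
    (α : GaloisField 2 m) (hα : orderOf α = 2 ^ m - 1)
    (C : Submodule (ZMod 2) (Fin (2 ^ m - 1) → ZMod 2))
    (hC : ∀ c : Fin (2 ^ m - 1) → ZMod 2, c ∈ C ↔
      ((∀ j < (2 ^ m - 1) / 3,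
          ∑ i : Fin (2 ^ m - 1),
            algebraMap (ZMod 2) (GaloisField 2 m) (c i) * (α ^ (3 * j)) ^ (i : ℕ) = 0) ∧
       (∀ s : ℕ,
          ∑ i : Fin (2 ^ m - 1),
            algebraMap (ZMod 2) (GaloisField 2 m) (c i) * (α ^ (2 ^ s)) ^ (i : ℕ) = 0))) :
    ∀ c ∈ C, c ≠ 0 → 6 ≤ hammingNorm c := by
  classical
  intro c hc hc0
  by_contra hlt
  push_neg at hlt
  have hm4 : 4 ≤ m := by
    obtain ⟨k, hk⟩ := hm; omega
  have hn15 : 15 ≤ 2 ^ m - 1 := by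
    have : (2:ℕ)^4 ≤ 2^m := Nat.pow_le_pow_right (by norm_num) hm4
    omega
  obtain ⟨h1, h2⟩ := (hC c).mp hc
  -- the relevant power sums vanish for k = 0,1,2,3,4
  have key : ∀ k ≤ 4, ∑ i : Fin (2 ^ m - 1),
      algebraMap (ZMod 2) (GaloisField 2 m) (c i) * (α ^ (i : ℕ)) ^ k = 0 := by
    intro k hk
    interval_cases k
    · have h := h1 0 (by omega)
      simpa using h
    · have h := h2 0
      simpa [pow_right_comm] using h
    · have h := h2 1
      simpa [pow_right_comm] using h
    · have h := h1 1 (by omega)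
      have e3 : 3 * 1 = 3 := by norm_num
      rw [e3] at h
      simpa [pow_right_comm] using h
    · have h := h2 2
      have e4 : (2:ℕ) ^ 2 = 4 := by norm_num
      rw [e4] at h
      simpa [pow_right_comm] using h
  -- support of c
  set S : Finset (Fin (2 ^ m - 1)) := Finset.univ.filter (fun i => c i ≠ 0) with hS
  have hcard : S.card ≤ 5 := by
    have : hammingNorm c = S.card := rfl
    omega
  have hSne : S.Nonempty := by
    obtain ⟨i, hi⟩ := Function.ne_iff.mp hc0
    exact ⟨i, by simp only [hS, Finset.mem_filter, Finset.mem_univ, true_and]; exact hi⟩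
  have hone : ∀ a : ZMod 2, a ≠ 0 → a = 1 := by decide
  -- power sums restricted to the support
  have keyS : ∀ k ≤ 4, ∑ i ∈ S, (α ^ (i : ℕ)) ^ k = 0 := by
    intro k hk
    have e1 : ∑ i ∈ S, (α ^ (i : ℕ)) ^ k
        = ∑ i ∈ S, algebraMap (ZMod 2) (GaloisField 2 m) (c i) * (α ^ (i : ℕ)) ^ k := by
      refine Finset.sum_congr rfl fun i hi => ?_
      have hci : c i ≠ 0 := by simpa [hS] using hi
      rw [hone _ hci]
      simp
    have e2 : ∑ i ∈ S, algebraMap (ZMod 2) (GaloisField 2 m) (c i) * (α ^ (i : ℕ)) ^ k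
        = ∑ i : Fin (2 ^ m - 1),
            algebraMap (ZMod 2) (GaloisField 2 m) (c i) * (α ^ (i : ℕ)) ^ k := by
      refine Finset.sum_subset (Finset.subset_univ S) fun i _ hi => ?_
      have hci : c i = 0 := by
        by_contra h
        exact hi (by simp only [hS, Finset.mem_filter, Finset.mem_univ, true_and]; exact h)
      simp [hci]
    rw [e1, e2]; exact key k hk
  -- α is nonzero
  have hnpos : 0 < 2 ^ m - 1 := by omega
  have hαpow : α ^ (2 ^ m - 1) = 1 := by rw [← hα]; exact pow_orderOf_eq_one α
  have hα0 : α ≠ 0 := by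
    intro h
    rw [h, zero_pow hnpos.ne'] at hαpow
    exact zero_ne_one hαpow
  -- distinctness of α^i for i < 2^m - 1
  have hinj : ∀ a b : ℕ, a < 2 ^ m - 1 → b < 2 ^ m - 1 → α ^ a = α ^ b → a = b := by
    have main : ∀ a b : ℕ, a ≤ b → b < 2 ^ m - 1 → α ^ a = α ^ b → a = b := by
      intro a b hab hbn hpow
      have hsplit : α ^ b = α ^ a * α ^ (b - a) := by
        rw [← pow_add]; congr 1; omega
      have hmul : α ^ a * (1 : GaloisField 2 m) = α ^ a * α ^ (b - a) := by
        rw [mul_one, ← hsplit, hpow]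
      have hcan : (1 : GaloisField 2 m) = α ^ (b - a) :=
        mul_left_cancel₀ (pow_ne_zero a hα0) hmul
      have hdvd : orderOf α ∣ (b - a) := orderOf_dvd_of_pow_eq_one hcan.symm
      rw [hα] at hdvd
      have hba : b - a = 0 := Nat.eq_zero_of_dvd_of_lt hdvd (by omega)
      omega
    intro a b ha hb hpow
    rcases le_total a b with h | h
    · exact main a b h hb hpow
    · exact (main b a h ha hpow.symm).symm
  -- enumerate the support
  have hwpos : 0 < S.card := Finset.card_pos.mpr hSne
  set e := S.equivFin with he
  set f : Fin S.card → GaloisField 2 m :=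
    fun j => α ^ (((e.symm j : S) : Fin (2 ^ m - 1)) : ℕ) with hf
  have hfinj : Function.Injective f := by
    intro a b hab
    have h := hinj _ _ (Fin.is_lt _) (Fin.is_lt _) hab
    have : ((e.symm a : S) : Fin (2 ^ m - 1)) = ((e.symm b : S) : Fin (2 ^ m - 1)) :=
      Fin.val_injective h
    exact e.symm.injective (Subtype.coe_injective this)
  have hsums : ∀ i : Fin S.card,
      (∑ j : Fin S.card, (fun _ => (1 : GaloisField 2 m)) j * f j ^ (i : ℕ)) = 0 := by
    intro i
    have hk : (i : ℕ) ≤ 4 := by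
      have := i.is_lt; omega
    have hsum : ∑ j : Fin S.card, f j ^ (i : ℕ) = ∑ x ∈ S, (α ^ (x : ℕ)) ^ (i : ℕ) := by
      rw [← Finset.sum_attach S (fun x => (α ^ (x : ℕ)) ^ (i : ℕ))]
      exact Equiv.sum_comp e.symm (fun x : S => (α ^ ((x : Fin (2 ^ m - 1)) : ℕ)) ^ (i : ℕ))
    simp only [one_mul]
    rw [hsum]
    exact keyS (i : ℕ) hk
  have hzero : (fun _ : Fin S.card => (1 : GaloisField 2 m)) = 0 :=
    Matrix.eq_zero_of_forall_pow_sum_mul_pow_eq_zero hfinj hsums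
  have hcontra := congrFun hzero ⟨0, hwpos⟩
  exact one_ne_zero hcontra
end

section
/- Let C be a binary linear code of length n = 2^m - 1 (m even, m > 2), minimum distance d = 6, and suppose the coordinate set {1,...,n} is partitioned into n/3 groups of size 3 such that for each group the dual code C⊥ contains a codeword of weight 3 supported exactly on that group. Then the dimension k of C satisfies k ≤ (2/3)(2^m - 1) - m. -/
open Finset

/-- Dimension bound for binary codes of length `2^m - 1`, distance `6`,
locality `2` with disjoint repair groups: `k ≤ (2/3)(2^m - 1) - m`. -/
theorem dimension_bound_d6_disjoint_groups
    (m : ℕ) (hm : Even m) (hm2 : 2 < m)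
    (C : Submodule (ZMod 2) (Fin (2 ^ m - 1) → ZMod 2))
    -- minimum distance is `6`
    (hd : ∀ c ∈ C, c ≠ 0 → 6 ≤ hammingNorm c)
    (hd' : ∃ c ∈ C, c ≠ 0 ∧ hammingNorm c = 6)
    -- disjoint repair groups
    (P : Finset (Finset (Fin (2 ^ m - 1))))
    (hcard : P.card = (2 ^ m - 1) / 3)
    (hsize : ∀ g ∈ P, g.card = 3)
    (hdisj : (P : Set (Finset (Fin (2 ^ m - 1)))).PairwiseDisjoint id)
    (hcover : ∀ i : Fin (2 ^ m - 1), ∃ g ∈ P, i ∈ g)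
    -- a weight-3 parity check supported exactly on each group
    (hchecks : ∀ g ∈ P, ∃ y : Fin (2 ^ m - 1) → ZMod 2,
        (∀ x ∈ C, ∑ j, x j * y j = 0) ∧ (∀ i, y i ≠ 0 ↔ i ∈ g)) :
    Module.finrank (ZMod 2) C ≤ 2 * (2 ^ m - 1) / 3 - m := by
  classical
  have h2m : (8:ℕ) ≤ 2 ^ m := by
    calc (8:ℕ) = 2 ^ 3 := rfl
    _ ≤ 2 ^ m := Nat.pow_le_pow_right (by norm_num) (by omega)
  have hnpos : 0 < 2 ^ m - 1 := by omega
  have h3n : 3 ∣ 2 ^ m - 1 := by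
    obtain ⟨t, ht⟩ := hm
    have h4 : (4:ℕ) ^ t ≡ 1 ^ t [MOD 3] := Nat.ModEq.pow t (by decide)
    have h4' : (2:ℕ) ^ m = 4 ^ t := by
      rw [ht, pow_add, (by norm_num : (4:ℕ) = 2 * 2), mul_pow]
    rw [one_pow] at h4
    have := (Nat.modEq_iff_dvd' (Nat.one_le_iff_ne_zero.mpr (pow_ne_zero t (by norm_num)))).mp h4.symm
    rw [h4']; exact this
  have hone : ∀ a : ZMod 2, a ≠ 0 → a = 1 := by decide
  -- sum over each group is zero
  have hgroupsum : ∀ g ∈ P, ∀ c ∈ C, ∑ j ∈ g, c j = 0 := by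
    intro g hg c hc
    obtain ⟨y, hy1, hy2⟩ := hchecks g hg
    have hz := hy1 c hc
    have hsplit : ∑ j ∈ g, c j * y j = ∑ j, c j * y j := by
      refine Finset.sum_subset (Finset.subset_univ g) ?_
      intro j _ hj
      have hyj : y j = 0 := by
        by_contra h; exact hj ((hy2 j).1 h)
      rw [hyj, mul_zero]
    have : ∑ j ∈ g, c j = ∑ j ∈ g, c j * y j := by
      refine Finset.sum_congr rfl ?_
      intro j hj
      rw [hone (y j) (by rw [hy2 j]; exact hj), mul_one]
    rw [this, hsplit, hz]
  -- support within each group has even cardinality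
  have heven : ∀ g ∈ P, ∀ c ∈ C, 2 ∣ (g.filter fun j => c j ≠ 0).card := by
    intro g hg c hc
    have h1 : (((g.filter fun j => c j ≠ 0).card : ℕ) : ZMod 2) = 0 := by
      have hs : ∑ j ∈ g.filter (fun j => c j ≠ 0), c j = 0 := by
        rw [Finset.sum_filter_ne_zero]; exact hgroupsum g hg c hc
      calc (((g.filter fun j => c j ≠ 0).card : ℕ) : ZMod 2)
          = ∑ _j ∈ g.filter (fun j => c j ≠ 0), (1 : ZMod 2) := by
            rw [Finset.sum_const, nsmul_eq_mul, mul_one]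
        _ = ∑ j ∈ g.filter (fun j => c j ≠ 0), c j := by
            refine Finset.sum_congr rfl ?_
            intro j hj
            exact (hone (c j) (Finset.mem_filter.mp hj).2).symm
        _ = 0 := hs
    exact (ZMod.natCast_eq_zero_iff _ 2).mp h1
  -- representatives
  have hgne : ∀ g ∈ P, g.Nonempty := by
    intro g hg
    rw [← Finset.card_pos, hsize g hg]; norm_num
  have hrepex : ∀ g : Finset (Fin (2 ^ m - 1)), ∃ i : Fin (2 ^ m - 1), g ∈ P → i ∈ g := by
    intro g
    by_cases hg : g ∈ P
    · exact ⟨(hgne g hg).choose, fun _ => (hgne g hg).choose_spec⟩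
    · exact ⟨⟨0, hnpos⟩, fun h => absurd h hg⟩
  choose rep hrepmem using hrepex
  -- groups are determined by their members
  have huniq : ∀ g ∈ P, ∀ g' ∈ P, ∀ i : Fin (2 ^ m - 1), i ∈ g → i ∈ g' → g = g' := by
    intro g hg g' hg' i hig hig'
    by_contra hne
    exact (Finset.disjoint_left.mp (hdisj hg hg' hne)) hig hig'
  set R : Finset (Fin (2 ^ m - 1)) := P.image rep with hR
  have hRcard : R.card = P.card := by
    rw [hR]
    refine Finset.card_image_of_injOn ?_
    intro g hg g' hg' hrr
    refine huniq g hg g' hg' (rep g) (hrepmem g hg) ?_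
    rw [hrr]; exact hrepmem g' hg'
  set S : Finset (Fin (2 ^ m - 1)) := Finset.univ \ R with hS
  have hScard : S.card = 2 ^ m - 1 - (2 ^ m - 1) / 3 := by
    rw [hS, Finset.card_sdiff_of_subset (Finset.subset_univ R), Finset.card_univ, Fintype.card_fin,
      hRcard, hcard]
  -- key: restricted weight at least 3
  have hkey : ∀ c : Fin (2 ^ m - 1) → ZMod 2, c ∈ C → c ≠ 0 →
      3 ≤ (S.filter fun i => c i ≠ 0).card := by
    intro c hc hc0
    set T := P.filter (fun g => ∃ j ∈ g, c j ≠ 0) with hT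
    have hle2 : ∀ g ∈ P, (g.filter fun j => c j ≠ 0).card ≤ 2 := by
      intro g hg
      have h1 := heven g hg c hc
      have h2 : (g.filter fun j => c j ≠ 0).card ≤ 3 := by
        rw [← hsize g hg]; exact Finset.card_le_card (Finset.filter_subset _ _)
      omega
    have h6 : 6 ≤ (Finset.univ.filter fun i => c i ≠ 0).card := by
      have := hd c hc hc0
      simpa [hammingNorm] using this
    have hT3 : 3 ≤ T.card := by
      have hsub : (Finset.univ.filter fun i => c i ≠ 0) ⊆
          T.biUnion (fun g => g.filter fun j => c j ≠ 0) := by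
        intro i hi
        have hi' : c i ≠ 0 := (Finset.mem_filter.mp hi).2
        obtain ⟨g, hg, hig⟩ := hcover i
        refine Finset.mem_biUnion.mpr ⟨g, ?_, Finset.mem_filter.mpr ⟨hig, hi'⟩⟩
        exact Finset.mem_filter.mpr ⟨hg, ⟨i, hig, hi'⟩⟩
      have h1 := Finset.card_le_card hsub
      have h2 := Finset.card_biUnion_le (s := T) (t := fun g => g.filter fun j => c j ≠ 0)
      have h3 : ∑ g ∈ T, (g.filter fun j => c j ≠ 0).card ≤ ∑ _g ∈ T, 2 :=
        Finset.sum_le_sum (fun g hg => hle2 g (Finset.mem_filter.mp hg).1)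
      rw [Finset.sum_const, smul_eq_mul] at h3
      omega
    -- in each touched group, at least one support element survives in S
    have hsurv : ∀ g ∈ T, 1 ≤ ((g.filter fun j => c j ≠ 0) \ R).card := by
      intro g hgT
      obtain ⟨hg, j, hjg, hjc⟩ := Finset.mem_filter.mp hgT
      have hge1 : 1 ≤ (g.filter fun j => c j ≠ 0).card :=
        Finset.card_pos.mpr ⟨j, Finset.mem_filter.mpr ⟨hjg, hjc⟩⟩
      have hge2 : 2 ≤ (g.filter fun j => c j ≠ 0).card := by
        have := heven g hg c hc; omega
      have hinter : (g.filter fun j => c j ≠ 0) ∩ R ⊆ {rep g} := by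
        intro i hi
        obtain ⟨hi1, hi2⟩ := Finset.mem_inter.mp hi
        obtain ⟨g', hg', hrg'⟩ := Finset.mem_image.mp hi2
        have : g = g' := huniq g hg g' hg' i (Finset.mem_filter.mp hi1).1
          (hrg' ▸ hrepmem g' hg')
        rw [Finset.mem_singleton, ← hrg', this]
      have h1 : ((g.filter fun j => c j ≠ 0) ∩ R).card ≤ 1 := by
        calc _ ≤ ({rep g} : Finset (Fin (2 ^ m - 1))).card := Finset.card_le_card hinter
        _ = 1 := Finset.card_singleton _
      have h2 := Finset.card_sdiff_add_card_inter (g.filter fun j => c j ≠ 0) R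
      omega
    have hdisjT : ∀ g₁ ∈ T, ∀ g₂ ∈ T, g₁ ≠ g₂ →
        Disjoint ((g₁.filter fun j => c j ≠ 0) \ R) ((g₂.filter fun j => c j ≠ 0) \ R) := by
      intro g₁ hg₁ g₂ hg₂ hne
      have := hdisj (Finset.mem_filter.mp hg₁).1 (Finset.mem_filter.mp hg₂).1 hne
      refine Finset.disjoint_left.mpr ?_
      intro a ha ha'
      have h1 : a ∈ g₁ := (Finset.mem_filter.mp (Finset.mem_sdiff.mp ha).1).1
      have h2 : a ∈ g₂ := (Finset.mem_filter.mp (Finset.mem_sdiff.mp ha').1).1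
      exact (Finset.disjoint_left.mp this) h1 h2
    have hsub2 : T.biUnion (fun g => (g.filter fun j => c j ≠ 0) \ R) ⊆
        S.filter fun i => c i ≠ 0 := by
      intro i hi
      obtain ⟨g, hg, hig⟩ := Finset.mem_biUnion.mp hi
      obtain ⟨hig1, hig2⟩ := Finset.mem_sdiff.mp hig
      refine Finset.mem_filter.mpr ⟨?_, (Finset.mem_filter.mp hig1).2⟩
      rw [hS]; exact Finset.mem_sdiff.mpr ⟨Finset.mem_univ i, hig2⟩
    calc (3:ℕ) ≤ T.card := hT3
    _ = ∑ _g ∈ T, 1 := by rw [Finset.sum_const, smul_eq_mul, mul_one]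
    _ ≤ ∑ g ∈ T, ((g.filter fun j => c j ≠ 0) \ R).card := Finset.sum_le_sum hsurv
    _ = (T.biUnion (fun g => (g.filter fun j => c j ≠ 0) \ R)).card :=
        (Finset.card_biUnion hdisjT).symm
    _ ≤ (S.filter fun i => c i ≠ 0).card := Finset.card_le_card hsub2
  -- sphere-packing injection
  set ι := {j : Fin (2 ^ m - 1) // j ∈ S} with hι
  letI : Fintype C := Fintype.ofFinite _
  set err : Option ι → (ι → ZMod 2) := fun e => e.elim 0 (fun j => Pi.single j 1) with herr
  set Φ : C × Option ι → (ι → ZMod 2) :=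
    fun p => (fun j => (p.1 : Fin (2 ^ m - 1) → ZMod 2) j.1) + err p.2 with hΦ
  have hinj : Function.Injective Φ := by
    rintro ⟨c, e⟩ ⟨c', e'⟩ h
    simp only [hΦ] at h
    have hcc : (c : Fin (2 ^ m - 1) → ZMod 2) = (c' : Fin (2 ^ m - 1) → ZMod 2) := by
      by_contra hne
      have hdmem : (c : Fin (2 ^ m - 1) → ZMod 2) - c' ∈ C := sub_mem c.2 c'.2
      have hd0 : (c : Fin (2 ^ m - 1) → ZMod 2) - c' ≠ 0 := sub_ne_zero.mpr hne
      have h3 := hkey _ hdmem hd0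
      set E : Finset (Fin (2 ^ m - 1)) :=
        (e.elim ∅ fun j => {j.1}) ∪ (e'.elim ∅ fun j => {j.1}) with hE
      have hEcard : E.card ≤ 2 := by
        refine le_trans (Finset.card_union_le _ _) ?_
        cases e <;> cases e' <;> simp
      have hsubE : (S.filter fun i => ((c : Fin (2 ^ m - 1) → ZMod 2) - c') i ≠ 0) ⊆ E := by
        intro i hi
        obtain ⟨hiS, hid⟩ := Finset.mem_filter.mp hi
        by_contra hiE
        have hfun := congrFun h ⟨i, hiS⟩
        have h1 : err e ⟨i, hiS⟩ = 0 := by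
          cases e with
          | none => rfl
          | some j =>
            have hne' : (⟨i, hiS⟩ : ι) ≠ j := by
              intro hh
              apply hiE
              rw [hE]
              exact Finset.mem_union_left _ (by simp [← hh])
            simp only [herr, Option.elim]
            exact Pi.single_eq_of_ne hne' 1
        have h2 : err e' ⟨i, hiS⟩ = 0 := by
          cases e' with
          | none => rfl
          | some j =>
            have hne' : (⟨i, hiS⟩ : ι) ≠ j := by
              intro hh
              apply hiE
              rw [hE]
              exact Finset.mem_union_right _ (by simp [← hh])
            simp only [herr, Option.elim]
            exact Pi.single_eq_of_ne hne' 1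
        simp only [Pi.add_apply, h1, h2, add_zero] at hfun
        apply hid
        simp [Pi.sub_apply, hfun]
      have := Finset.card_le_card hsubE
      omega
    have hee : err e = err e' := by
      have h' : (fun j : ι => (c : Fin (2 ^ m - 1) → ZMod 2) j.1) + err e
          = (fun j : ι => (c : Fin (2 ^ m - 1) → ZMod 2) j.1) + err e' := by
        rw [h, hcc]
      exact add_left_cancel h'
    have hee' : e = e' := by
      cases e with
      | none =>
        cases e' with
        | none => rfl
        | some j =>
          exfalso
          have := congrFun hee j
          simp [herr] at this
      | some j =>
        cases e' with
        | none =>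
          exfalso
          have := congrFun hee j
          simp [herr] at this
        | some j' =>
          congr 1
          by_contra hjj
          have := congrFun hee j
          simp [herr, Pi.single_eq_of_ne hjj] at this
    exact Prod.ext (Subtype.ext hcc) hee'
  have hcount : Fintype.card C * (S.card + 1) ≤ 2 ^ S.card := by
    have h1 := Fintype.card_le_of_injective Φ hinj
    rw [Fintype.card_prod, Fintype.card_option, Fintype.card_fun, ZMod.card,
      Fintype.card_coe] at h1
    exact h1
  have hcardC : Fintype.card C = 2 ^ Module.finrank (ZMod 2) C := by
    have := Module.card_eq_pow_finrank (K := ZMod 2) (V := C)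
    rwa [ZMod.card] at this
  set k := Module.finrank (ZMod 2) C with hk
  rw [hcardC] at hcount
  -- arithmetic finish
  obtain ⟨u, hu⟩ := h3n
  have hs2u : S.card = 2 * u := by rw [hScard, hu]; omega
  have ha : (4:ℕ) ≤ 2 ^ (m - 1) := by
    calc (4:ℕ) = 2 ^ 2 := rfl
    _ ≤ 2 ^ (m - 1) := Nat.pow_le_pow_right (by norm_num) (by omega)
  have hm1 : 2 ^ m = 2 * 2 ^ (m - 1) := by
    rw [← pow_succ']
    congr 1
    omega
  have hslb : 2 ^ (m - 1) < S.card + 1 := by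
    rw [hs2u]; omega
  have hpow : 2 ^ (k + (m - 1)) < 2 ^ S.card := by
    calc 2 ^ (k + (m - 1)) = 2 ^ k * 2 ^ (m - 1) := pow_add 2 k (m - 1)
    _ < 2 ^ k * (S.card + 1) := by
        exact mul_lt_mul_of_pos_left hslb (by positivity)
    _ ≤ 2 ^ S.card := hcount
  have hlt : k + (m - 1) < S.card := by
    exact (Nat.pow_lt_pow_iff_right (by norm_num)).mp hpow
  have hgoal : 2 * (2 ^ m - 1) / 3 = 2 * u := by rw [hu]; omega
  omega
end

section
/- Let C be a binary linear code of length 3n' such that the coordinates are partitioned into n' disjoint triples, and for each triple the dual code contains the weight-3 parity check supported on that triple. Then the map sending each codeword to the vector of its restrictions to the triples (each restriction being an even-weight vector in F_2^3, identified with an element of F_4) is an injective map from C onto an additive code over F_4 of length n', and if C has minimum distance d then the image has minimum Hamming distance at least ⌈d/2⌉. -/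
lemma triple_wt_le : ∀ v : Fin 3 → ZMod 2, (∑ s, v s = 0) → hammingNorm v ≤ 2 := by
  decide

lemma split_norm (n' : ℕ) (x : Fin n' × Fin 3 → ZMod 2) :
    hammingNorm x = ∑ t : Fin n', hammingNorm (fun s => x (t, s)) := by
  unfold hammingNorm
  rw [Finset.card_eq_sum_card_fiberwise (f := Prod.fst) (t := Finset.univ)
    (fun p _ => Finset.mem_univ _)]
  refine Finset.sum_congr rfl fun t _ => ?_
  refine Finset.card_bij (fun p _ => p.2) ?_ ?_ ?_
  · intro p hp
    simp only [Finset.mem_filter, Finset.mem_univ, true_and] at hp ⊢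
    obtain ⟨h1, h2⟩ := hp
    rwa [show (t, p.2) = p from by rw [← h2]]
  · intro p hp q hq hpq
    simp only [Finset.mem_filter] at hp hq
    exact Prod.ext (hp.2.trans hq.2.symm) hpq
  · intro s hs
    simp only [Finset.mem_filter, Finset.mem_univ, true_and] at hs ⊢
    exact ⟨(t, s), ⟨hs, rfl⟩, rfl⟩



/-- Contraction of a binary code with disjoint weight-3 repair triples to an
additive code over `F_4`: the map recording the restriction of a codeword to
each triple (an even-weight vector of `F_2^3`, identified with an element of
`F_4` by a fixed `F_2`-linear bijection `ψ`) is injective on `C`, its image is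
an additive (`F_2`-linear) code over `F_4` of length `n'`, and if `C` has
minimum distance `d` then the image has minimum Hamming distance `≥ ⌈d/2⌉`. -/
theorem contraction_to_additive_F4_code
    [DecidableEq (GaloisField 2 2)]
    (n' d : ℕ)
    -- coordinates grouped into the `n'` triples `{t} × Fin 3`
    (C : Submodule (ZMod 2) (Fin n' × Fin 3 → ZMod 2))
    -- each triple supports a weight-3 parity check of `C`
    (hchecks : ∀ t : Fin n', ∀ x ∈ C, ∑ s : Fin 3, x (t, s) = 0)
    -- `ψ` is an `F_2`-linear identification of the even-weight subspace of
    -- `F_2^3` with `F_4`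
    (ψ : (Fin 3 → ZMod 2) →ₗ[ZMod 2] GaloisField 2 2)
    (hψinj : ∀ v : Fin 3 → ZMod 2, (∑ s, v s = 0) → (ψ v = 0 ↔ v = 0))
    (hψsurj : ∀ z : GaloisField 2 2, ∃ v : Fin 3 → ZMod 2, (∑ s, v s = 0) ∧ ψ v = z)
    -- `C` has minimum distance `d`
    (hd : ∀ x ∈ C, x ≠ 0 → d ≤ hammingNorm x) :
    Set.InjOn (fun x : Fin n' × Fin 3 → ZMod 2 => fun t : Fin n' => ψ fun s => x (t, s))
        (C : Set (Fin n' × Fin 3 → ZMod 2)) ∧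
    (∃ D : Submodule (ZMod 2) (Fin n' → GaloisField 2 2),
      (D : Set (Fin n' → GaloisField 2 2)) =
        (fun x : Fin n' × Fin 3 → ZMod 2 => fun t : Fin n' => ψ fun s => x (t, s)) ''
          (C : Set (Fin n' × Fin 3 → ZMod 2))) ∧
    (∀ x ∈ C, x ≠ 0 →
      (d + 1) / 2 ≤ hammingNorm (fun t : Fin n' => ψ fun s => x (t, s))) := by
  set L : (Fin n' × Fin 3 → ZMod 2) →ₗ[ZMod 2] (Fin n' → GaloisField 2 2) :=
    { toFun := fun x => fun t => ψ fun s => x (t, s)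
      map_add' := fun x y => funext fun t => map_add ψ (fun s => x (t, s)) (fun s => y (t, s))
      map_smul' := fun c x => funext fun t => map_smul ψ c (fun s => x (t, s)) } with hL
  refine ⟨?_, ⟨C.map L, by rw [Submodule.map_coe]; rfl⟩, ?_⟩
  · intro x hx y hy hxy
    have hz : x - y ∈ C := sub_mem hx hy
    have hzero : x - y = 0 := by
      funext p
      have h1 : ψ (fun s => (x - y) (p.1, s)) = 0 := by
        have h := congrFun hxy p.1
        simp only [] at h
        have h2 : ψ (fun s => x (p.1, s)) - ψ (fun s => y (p.1, s)) = 0 := by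
          rw [h]; ring
        rw [← map_sub] at h2
        exact h2
      have h2 := (hψinj _ (hchecks p.1 _ hz)).mp h1
      have := congrFun h2 p.2
      simpa using this
    exact sub_eq_zero.mp hzero
  · intro x hx hx0
    have hdx := hd x hx hx0
    rw [split_norm] at hdx
    set N := hammingNorm (fun t : Fin n' => ψ fun s => x (t, s)) with hN
    have key : ∑ t : Fin n', hammingNorm (fun s => x (t, s)) ≤ 2 * N := by
      have step : ∀ t : Fin n', hammingNorm (fun s => x (t, s)) ≤
          2 * (if ψ (fun s => x (t, s)) ≠ 0 then 1 else 0) := by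
        intro t
        by_cases h : ψ (fun s => x (t, s)) = 0
        · have h0 : (fun s => x (t, s)) = 0 := (hψinj _ (hchecks t x hx)).mp h
          rw [h0]
          simp [hammingNorm, h]
        · simpa [h] using triple_wt_le (fun s => x (t, s)) (hchecks t x hx)
      calc ∑ t : Fin n', hammingNorm (fun s => x (t, s))
          ≤ ∑ t : Fin n', 2 * (if ψ (fun s => x (t, s)) ≠ 0 then 1 else 0) :=
            Finset.sum_le_sum fun t _ => step t
        _ = 2 * N := by
            rw [← Finset.mul_sum, Finset.sum_boole]
            simp [hN, hammingNorm]
    omega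
end

section
/- Let C be a code (not necessarily linear) over F_4 of length n' with minimum Hamming distance at least 3, and suppose u is a nonnegative integer with 4^u < n' - u. Then given any u fixed coordinates i_1,...,i_u, there exists a coordinate i_{u+1} outside {i_1,...,i_u} such that no nonzero codeword x of C satisfies i_{u+1} ∈ supp(x) ⊆ {i_1,...,i_{u+1}}. (Here we assume 0 ∈ C and distances are measured between codewords.) -/
/-- Pigeonhole step: for a (not necessarily linear) code over `F_4` of length
`n'` with minimum distance at least `3` containing `0`, and `u` fixed
coordinates (with `4^u < n' - u`), there is a further coordinate `j` such
that no nonzero codeword has `j` in its support and its support contained in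
the `u + 1` chosen coordinates. -/
theorem exists_uncovered_coordinate
    [DecidableEq (GaloisField 2 2)]
    (n' u : ℕ) (C : Set (Fin n' → GaloisField 2 2))
    (h0 : (0 : Fin n' → GaloisField 2 2) ∈ C)
    (hd : ∀ x ∈ C, ∀ y ∈ C, x ≠ y → 3 ≤ hammingDist x y)
    (hu : 4 ^ u < n' - u)
    (T : Finset (Fin n')) (hT : T.card = u) :
    ∃ j ∉ T, ∀ x ∈ C, x ≠ 0 →
      ¬ (x j ≠ 0 ∧ ∀ i : Fin n', x i ≠ 0 → i ∈ insert j T) := by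
  by_contra h
  push_neg at h
  choose x hxC hx0 hxj hxs using h
  classical
  haveI : Fintype (GaloisField 2 2) := Fintype.ofFinite _
  -- restriction map to T
  let F : Fin n' → (↥T → GaloisField 2 2) := fun j =>
    if hj : j ∉ T then (fun i => x j hj i) else 0
  have hcard : (Finset.univ : Finset (↥T → GaloisField 2 2)).card < Tᶜ.card := by
    rw [Finset.card_compl, hT, Fintype.card_fin]
    calc (Finset.univ : Finset (↥T → GaloisField 2 2)).card
        = Fintype.card (↥T → GaloisField 2 2) := rfl
      _ = 4 ^ u := by
          rw [Fintype.card_fun, ← Nat.card_eq_fintype_card, GaloisField.card 2 2 (by norm_num)]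
          norm_num [hT]
      _ < n' - u := hu
  obtain ⟨j, hj, j', hj', hne, hFeq⟩ :=
    Finset.exists_ne_map_eq_of_card_lt_of_maps_to hcard
      (fun a _ => Finset.mem_univ (F a))
  rw [Finset.mem_compl] at hj hj'
  set a := x j hj with ha
  set b := x j' hj' with hb
  have hFj : F j = fun i : ↥T => a i := dif_pos hj
  have hFj' : F j' = fun i : ↥T => b i := dif_pos hj'
  have hagree : ∀ i : Fin n', i ∈ T → a i = b i := by
    intro i hi
    have h2 : (fun i : ↥T => a i) = fun i : ↥T => b i := by
      rw [← hFj, ← hFj']; exact hFeq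
    exact congrFun h2 ⟨i, hi⟩
  -- support facts
  have hsupp : ∀ i : Fin n', i ≠ j → i ∉ T → a i = 0 := by
    intro i hij hiT
    by_contra hne0
    rcases Finset.mem_insert.mp (hxs j hj i hne0) with h1 | h1
    · exact hij h1
    · exact hiT h1
  have hsupp' : ∀ i : Fin n', i ≠ j' → i ∉ T → b i = 0 := by
    intro i hij hiT
    by_contra hne0
    rcases Finset.mem_insert.mp (hxs j' hj' i hne0) with h1 | h1
    · exact hij h1
    · exact hiT h1
  have hbj : b j = 0 := hsupp' j hne hj
  have habne : a ≠ b := by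
    intro hab
    have haj : a j ≠ 0 := hxj j hj
    rw [hab, hbj] at haj
    exact haj rfl
  have hdist : hammingDist a b ≤ 2 := by
    have hsub : ({i | a i ≠ b i} : Finset (Fin n')) ⊆ {j, j'} := by
      intro i hi
      simp only [Finset.mem_filter, Finset.mem_univ, true_and] at hi
      by_contra hmem
      simp only [Finset.mem_insert, Finset.mem_singleton, not_or] at hmem
      by_cases hiT : i ∈ T
      · exact hi (hagree i hiT)
      · exact hi ((hsupp i hmem.1 hiT).trans (hsupp' i hmem.2 hiT).symm)
    calc hammingDist a b = ({i | a i ≠ b i} : Finset (Fin n')).card := rfl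
      _ ≤ ({j, j'} : Finset (Fin n')).card := Finset.card_le_card hsub
      _ ≤ 2 := Finset.card_insert_le _ _ |>.trans (by simp)
  have := hd a (hxC j hj) b (hxC j' hj') habne
  omega
end

section
/- Let C be a binary linear code of length n = 2^m - 1 (m even, m > 2) with minimum distance d = 10, whose coordinates are partitioned into n/3 disjoint triples each supporting a weight-3 dual codeword. Then the dimension k of C satisfies k ≤ (2/3)(2^m - 1) - 2m + 1, and if k is even then k ≤ (2/3)(2^m - 1) - 2m. -/
/-!
On each repair triple a codeword has even weight, so it is determined there by two of its
three bits and has weight `0` or `2` on it. Reading those two bits as a letter of the additive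
group `𝔽₂ × 𝔽₂ ≅ 𝔽₄` maps `C` injectively to a code of length `ν = n / 3` over a four-letter
alphabet, with weights at least half the original ones, hence at least `5`. The Hamming bound
for radius `2` then gives `2 ^ k (1 + 3ν + 9 ν (ν - 1) / 2) ≤ 4 ^ ν`, and with `3ν + 1 = 2 ^ m`
the ball has more than `2 ^ (2m - 2)` points, so `k + 2m < 2ν + 2`.
-/
open Finset

section HammingBall

variable {ι β : Type*} [Fintype ι] [DecidableEq ι] [Fintype β] [DecidableEq β]

section Zero

variable [Zero β]

def hammingBall (t : ℕ) : Finset (ι → β) := {w | hammingNorm w ≤ t}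

@[simp]
theorem mem_hammingBall {t : ℕ} {w : ι → β} : w ∈ hammingBall t ↔ hammingNorm w ≤ t := by
  simp [hammingBall]

theorem card_filter_support_eq (s : Finset ι) :
    #{w : ι → β | ({i | w i ≠ 0} : Finset ι) = s} = (Fintype.card β - 1) ^ #s := by
  have hpi : ({w : ι → β | ({i | w i ≠ 0} : Finset ι) = s} : Finset (ι → β)) =
      Fintype.piFinset fun i => if i ∈ s then ({0}ᶜ : Finset β) else {0} := by
    ext w
    simp only [mem_filter, mem_univ, true_and, Fintype.mem_piFinset, Finset.ext_iff]
    refine forall_congr' fun i => ?_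
    by_cases hi : i ∈ s <;> simp [hi]
  rw [hpi, Fintype.card_piFinset]
  simp only [apply_ite Finset.card, card_compl, card_singleton]
  rw [Fintype.prod_ite_mem s fun _ => Fintype.card β - 1, prod_const]

theorem card_hammingNorm_eq (k : ℕ) :
    #{w : ι → β | hammingNorm w = k} =
      (Fintype.card ι).choose k * (Fintype.card β - 1) ^ k := by
  rw [card_eq_sum_card_fiberwise (f := fun w => ({i | w i ≠ 0} : Finset ι))
    (t := powersetCard k univ)]
  · rw [← card_univ, ← card_powersetCard, ← smul_eq_mul, ← sum_const]
    refine sum_congr rfl fun s hs => ?_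
    rw [mem_powersetCard] at hs
    rw [filter_filter, ← hs.2, ← card_filter_support_eq]
    congr 1
    ext w
    simp only [mem_filter, mem_univ, true_and, hammingNorm, and_iff_right_iff_imp]
    rintro rfl
    rfl
  · intro w hw
    simpa [hammingNorm] using hw

theorem card_hammingBall (t : ℕ) :
    #(hammingBall t : Finset (ι → β)) =
      ∑ k ∈ range (t + 1), (Fintype.card ι).choose k * (Fintype.card β - 1) ^ k := by
  rw [card_eq_sum_card_fiberwise (f := hammingNorm) (t := range (t + 1))]
  · refine sum_congr rfl fun k hk => ?_
    rw [← card_hammingNorm_eq, hammingBall, filter_filter]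
    congr 1
    ext w
    simp only [mem_filter, mem_univ, true_and, and_iff_right_iff_imp]
    rintro rfl
    exact Nat.lt_succ_iff.mp (mem_range.mp hk)
  · intro w hw
    simpa [Nat.lt_succ_iff] using hw

end Zero

theorem card_mul_card_hammingBall_le [AddCommGroup β] {α : Type*} [Fintype α] {f : α → ι → β}
    {t : ℕ}
    (hf : Pairwise fun a b => 2 * t < hammingDist (f a) (f b)) :
    Fintype.card α * #(hammingBall t : Finset (ι → β)) ≤ Fintype.card β ^ Fintype.card ι := by
  rw [← card_univ, ← card_product, ← Fintype.card_fun, ← card_univ]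
  refine card_le_card_of_injOn (fun p => f p.1 + p.2) (fun _ _ => mem_coe.2 (mem_univ _)) ?_
  rintro ⟨a, w⟩ hw ⟨b, w'⟩ hw' h
  simp only [coe_product, Set.mem_prod, mem_coe, mem_univ, true_and, mem_hammingBall]
    at hw hw' h
  obtain rfl : a = b := by
    by_contra hab
    have hdist : hammingDist (f a) (f b) = hammingDist w' w := by
      rw [hammingDist_eq_hammingNorm, hammingDist_eq_hammingNorm, neg_add_eq_sub,
        neg_add_eq_sub, sub_eq_sub_iff_add_eq_add.2 (by rw [← h, add_comm])]
    have := hammingDist_triangle w' 0 w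
    rw [hammingDist_zero_right, hammingDist_zero_left] at this
    have := hf hab
    omega
  rw [add_left_cancel h]

end HammingBall

def contractPairs {ι κ β : Type*} (a b : κ → ι) (x : ι → β) : κ → β × β :=
  fun g => (x (a g), x (b g))

section Contraction

variable {ι : Type*} [DecidableEq ι]

theorem card_filter_ne_zero_triple_le {a b c : ι} (hab : a ≠ b) (hac : a ≠ c) (hbc : b ≠ c)
    {x : ι → ZMod 2} (hx : ∑ i ∈ {a, b, c}, x i = 0) :
    #{i ∈ {a, b, c} | x i ≠ 0} ≤ if (x a, x b) = 0 then 0 else 2 := by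
  have ha : a ∉ ({b, c} : Finset ι) := by simp [hab, hac]
  have hb : b ∉ ({c} : Finset ι) := by simp [hbc]
  rw [sum_insert ha, sum_insert hb, sum_singleton] at hx
  rw [card_filter, sum_insert ha, sum_insert hb, sum_singleton]
  generalize x a = u, x b = v, x c = w at hx ⊢
  revert u v w
  decide

variable [Fintype ι]

theorem sum_card_filter_of_partition {P : Finset (Finset ι)}
    (hdisj : (P : Set (Finset ι)).PairwiseDisjoint id) (hcover : ∀ i, ∃ g ∈ P, i ∈ g)
    (p : ι → Prop) [DecidablePred p] : ∑ g ∈ P, #{i ∈ g | p i} = #{i | p i} := by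
  have hunion : P.biUnion id = univ := eq_univ_of_forall fun i => by simpa using hcover i
  simp_rw [card_filter]
  rw [← hunion, sum_biUnion hdisj]
  rfl

theorem sum_mul_eq_sum_of_ne_zero_iff_mem {g : Finset ι} {y : ι → ZMod 2}
    (hy : ∀ i, y i ≠ 0 ↔ i ∈ g) (x : ι → ZMod 2) : ∑ j, x j * y j = ∑ i ∈ g, x i := by
  have hone : ∀ a : ZMod 2, a ≠ 0 → a = 1 := by decide
  calc ∑ j, x j * y j = ∑ j, if j ∈ g then x j else 0 := sum_congr rfl fun j _ => ?_
    _ = ∑ i ∈ g, x i := by rw [sum_ite_mem, univ_inter]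
  split_ifs with hj
  · rw [hone (y j) ((hy j).2 hj), mul_one]
  · rw [not_not.1 (mt (hy j).1 hj), mul_zero]

theorem hammingNorm_le_two_mul_hammingNorm_contractPairs {P : Finset (Finset ι)}
    (hdisj : (P : Set (Finset ι)).PairwiseDisjoint id) (hcover : ∀ i, ∃ g ∈ P, i ∈ g)
    {a b c : P → ι} (hab : ∀ g, a g ≠ b g) (hac : ∀ g, a g ≠ c g) (hbc : ∀ g, b g ≠ c g)
    (habc : ∀ g : P, (g : Finset ι) = {a g, b g, c g})
    {x : ι → ZMod 2} (hx : ∀ g ∈ P, ∑ i ∈ g, x i = 0) :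
    hammingNorm x ≤ 2 * hammingNorm (contractPairs a b x) := by
  calc hammingNorm x = ∑ g ∈ P, #{i ∈ g | x i ≠ 0} :=
        (sum_card_filter_of_partition hdisj hcover _).symm
    _ = ∑ g : P, #{i ∈ (g : Finset ι) | x i ≠ 0} := (sum_coe_sort P _).symm
    _ ≤ ∑ g : P, if contractPairs a b x g = 0 then 0 else 2 := sum_le_sum fun g _ => by
        rw [habc g]
        exact card_filter_ne_zero_triple_le (hab g) (hac g) (hbc g) (habc g ▸ hx g g.2)
    _ = 2 * hammingNorm (contractPairs a b x) := by
        rw [hammingNorm, card_filter, mul_sum]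
        refine sum_congr rfl fun g _ => ?_
        by_cases h : contractPairs a b x g = 0 <;> simp [h]

end Contraction

theorem sq_lt_four_mul_sum_choose {ν : ℕ} (hν : 2 ≤ ν) :
    (3 * ν + 1) ^ 2 < 4 * ∑ i ∈ range 3, ν.choose i * 3 ^ i := by
  obtain ⟨μ, rfl⟩ := Nat.exists_eq_add_of_le' hν
  have hchoose : (μ + 2).choose 2 * 2 = (μ + 2) * (μ + 1) := by
    simpa using (Nat.add_one_mul_choose_eq (μ + 1) 1).symm
  simp only [sum_range_succ, range_zero, sum_empty, Nat.choose_zero_right,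
    Nat.choose_one_right]
  nlinarith

theorem add_two_mul_lt_of_hamming_bound {k m ν : ℕ} (hν : 2 ≤ ν) (hpow : 2 ^ m = 3 * ν + 1)
    (hpack : 2 ^ k * ∑ i ∈ range 3, ν.choose i * 3 ^ i ≤ 4 ^ ν) : k + 2 * m < 2 * ν + 2 := by
  refine (Nat.pow_lt_pow_iff_right one_lt_two).mp ?_
  calc 2 ^ (k + 2 * m) = 2 ^ k * (3 * ν + 1) ^ 2 := by rw [pow_add, pow_mul', hpow]
    _ < 2 ^ k * (4 * ∑ i ∈ range 3, ν.choose i * 3 ^ i) := by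
        gcongr
        exact sq_lt_four_mul_sum_choose hν
    _ = 4 * (2 ^ k * ∑ i ∈ range 3, ν.choose i * 3 ^ i) := by ring
    _ ≤ 4 * 4 ^ ν := Nat.mul_le_mul_left 4 hpack
    _ = 2 ^ (2 * ν + 2) := by rw [pow_succ, pow_succ, pow_mul]; ring

theorem dimension_bound_d10_disjoint_groups_general
    (m : ℕ) (hm2 : 2 < m)
    (C : Submodule (ZMod 2) (Fin (2 ^ m - 1) → ZMod 2))
    -- minimum distance is `10`
    (hd : ∀ c ∈ C, c ≠ 0 → 10 ≤ hammingNorm c)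
    -- disjoint repair groups
    (P : Finset (Finset (Fin (2 ^ m - 1))))
    (hsize : ∀ g ∈ P, g.card = 3)
    (hdisj : (P : Set (Finset (Fin (2 ^ m - 1)))).PairwiseDisjoint id)
    (hcover : ∀ i : Fin (2 ^ m - 1), ∃ g ∈ P, i ∈ g)
    (hchecks : ∀ g ∈ P, ∃ y : Fin (2 ^ m - 1) → ZMod 2,
        (∀ x ∈ C, ∑ j, x j * y j = 0) ∧ (∀ i, y i ≠ 0 ↔ i ∈ g)) :
    Module.finrank (ZMod 2) C ≤ 2 * (2 ^ m - 1) / 3 - 2 * m + 1 ∧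
    (Even (Module.finrank (ZMod 2) C) →
      Module.finrank (ZMod 2) C ≤ 2 * (2 ^ m - 1) / 3 - 2 * m) := by
  classical
  have hlength : 2 ^ m - 1 = 3 * #P := by
    simpa [sum_congr rfl hsize, mul_comm] using
      (sum_card_filter_of_partition hdisj hcover fun _ => True).symm
  have hpow : 2 ^ m = 3 * #P + 1 := by have := Nat.one_le_two_pow (n := m); omega
  choose a b c hab hac hbc habc using fun g : P => card_eq_three.mp (hsize g g.2)
  have hparity (x) (hx : x ∈ C) (g) (hg : g ∈ P) : ∑ i ∈ g, x i = 0 := by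
    obtain ⟨y, hyC, hy⟩ := hchecks g hg
    rw [← sum_mul_eq_sum_of_ne_zero_iff_mem hy, hyC x hx]
  have hdist : Pairwise fun x y : C =>
      2 * 2 < hammingDist (contractPairs a b x.1) (contractPairs a b y.1) := by
    intro x y hxy
    have hxyC := sub_mem x.2 y.2
    have h10 := hd _ hxyC (sub_ne_zero.2 (Subtype.coe_injective.ne hxy))
    have h2 := hammingNorm_le_two_mul_hammingNorm_contractPairs hdisj hcover hab hac hbc habc
      (hparity _ hxyC)
    rw [hammingDist_comm, hammingDist_eq_hammingNorm, neg_add_eq_sub]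
    exact (by omega : 4 < hammingNorm (contractPairs a b (x.1 - y.1)))
  have hpack := card_mul_card_hammingBall_le hdist
  rw [card_hammingBall, Module.card_eq_pow_finrank (K := ZMod 2), Fintype.card_coe] at hpack
  have hk := add_two_mul_lt_of_hamming_bound
    (by have := Nat.pow_le_pow_right two_pos hm2; omega) hpow (by simpa using hpack)
  exact ⟨by omega, fun ⟨r, hr⟩ => by omega⟩

/-- Dimension bound for binary codes of length `2^m - 1`, distance `10`,
locality `2` with disjoint repair groups: `k ≤ (2/3)(2^m - 1) - 2m + 1`, and
`k ≤ (2/3)(2^m - 1) - 2m` when `k` is even. -/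
theorem dimension_bound_d10_disjoint_groups
    (m : ℕ) (hm : Even m) (hm2 : 2 < m)
    (C : Submodule (ZMod 2) (Fin (2 ^ m - 1) → ZMod 2))
    -- minimum distance is `10`
    (hd : ∀ c ∈ C, c ≠ 0 → 10 ≤ hammingNorm c)
    (hd' : ∃ c ∈ C, c ≠ 0 ∧ hammingNorm c = 10)
    -- disjoint repair groups
    (P : Finset (Finset (Fin (2 ^ m - 1))))
    (hcard : P.card = (2 ^ m - 1) / 3)
    (hsize : ∀ g ∈ P, g.card = 3)
    (hdisj : (P : Set (Finset (Fin (2 ^ m - 1)))).PairwiseDisjoint id)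
    (hcover : ∀ i : Fin (2 ^ m - 1), ∃ g ∈ P, i ∈ g)
    (hchecks : ∀ g ∈ P, ∃ y : Fin (2 ^ m - 1) → ZMod 2,
        (∀ x ∈ C, ∑ j, x j * y j = 0) ∧ (∀ i, y i ≠ 0 ↔ i ∈ g)) :
    Module.finrank (ZMod 2) C ≤ 2 * (2 ^ m - 1) / 3 - 2 * m + 1 ∧
    (Even (Module.finrank (ZMod 2) C) →
      Module.finrank (ZMod 2) C ≤ 2 * (2 ^ m - 1) / 3 - 2 * m) :=
  dimension_bound_d10_disjoint_groups_general m hm2 C hd P hsize hdisj hcover hchecks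
end

section
/- Let C be a binary linear code of length n = 2^m - 1, minimum distance d = 6, and locality r = 2 (every coordinate lies in the support of a weight-3 dual codeword). If m is even and m > 8, then the dimension k of C satisfies k ≤ (2/3)(2^m - 1) - m, even without assuming disjoint repair groups. -/
/-!
Let `Y` be the set of weight-3 dual codewords, so that their supports cover all `n = 2^m - 1`
coordinates, and let `r = dim ⟨Y⟩`. Split `Y` into components that are connected through
overlapping supports. A component consisting of a single vector whose support meets no other
member (an isolated vector) covers 3 coordinates and has rank 1. Any other component `K` has rank
at least 2, and a spanning subfamily grown greedily along overlaps adds at most 2 new coordinates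
per vector, so `K` covers at most `2 rank K + 1 ≤ 5/2 rank K` coordinates. Hence `2n ≤ 5r + a`,
where `a` is the number of isolated vectors.

Zeroing one coordinate of an isolated vector gives a weight-2 vector orthogonal to `Y`. These
`3a` vectors and `0` lie in `Y^⊥ ⊇ C`, and since `d = 6 > 2 + 2` they are pairwise incongruent
modulo `C`, so `3a + 1 ≤ 2^(n - r - k)`. If `3a ≥ 2^(m-1)` then `n - r - k ≥ m`, while
`r ≥ n/3` because `3a ≤ n`; otherwise `2n ≤ 5r + a` already gives `r ≥ n/3 + m` since
`2^(m-1) > 15m`. As `m` is even, `3 ∣ n`, and `k ≤ 2n/3 - m` follows in both cases.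
-/

open Finset Submodule Module Matrix

namespace LRC

variable {ι : Type*} [Fintype ι]

section Support

variable {M : Type*} [Zero M] [DecidableEq M]

def supp (z : ι → M) : Finset ι := {j | z j ≠ 0}

@[simp]
lemma mem_supp {z : ι → M} {j : ι} : j ∈ supp z ↔ z j ≠ 0 := by simp [supp]

lemma hammingNorm_eq_card_supp (z : ι → M) : hammingNorm z = #(supp z) := rfl

lemma supp_nonempty_iff {z : ι → M} : (supp z).Nonempty ↔ z ≠ 0 := by
  simp [Finset.Nonempty, funext_iff]

def Overlap (Y : Finset (ι → M)) (a b : ι → M) : Prop :=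
  a ∈ Y ∧ b ∈ Y ∧ ¬Disjoint (supp a) (supp b)

open Classical in
noncomputable def component (Y : Finset (ι → M)) (z : ι → M) : Finset (ι → M) :=
  {y ∈ Y | Relation.ReflTransGen (Overlap Y) z y}

variable {Y : Finset (ι → M)} {z : ι → M}

open Classical in
lemma mem_component {y : ι → M} :
    y ∈ component Y z ↔ y ∈ Y ∧ Relation.ReflTransGen (Overlap Y) z y :=
  mem_filter

lemma component_subset : component Y z ⊆ Y := fun _ hy => (mem_component.1 hy).1

lemma self_mem_component (hz : z ∈ Y) : z ∈ component Y z :=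
  mem_component.2 ⟨hz, .refl⟩

lemma mem_component_of_not_disjoint {x y : ι → M} (hy : y ∈ component Y z) (hx : x ∈ Y)
    (hxy : ¬Disjoint (supp y) (supp x)) : x ∈ component Y z :=
  mem_component.2 ⟨hx, (mem_component.1 hy).2.tail ⟨(mem_component.1 hy).1, hx, hxy⟩⟩

variable [DecidableEq ι]

lemma supp_update_zero (z : ι → M) (i : ι) :
    supp (Function.update z i 0) = (supp z).erase i := by
  ext j
  by_cases h : j = i <;> simp [h]

def suppUnion (Y : Finset (ι → M)) : Finset ι := Y.biUnion supp

lemma mem_suppUnion {j : ι} : j ∈ suppUnion Y ↔ ∃ z ∈ Y, z j ≠ 0 := by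
  simp [suppUnion]

lemma supp_subset_suppUnion (hz : z ∈ Y) :
    supp z ⊆ suppUnion Y :=
  subset_biUnion_of_mem supp hz

lemma suppUnion_union (Y Y' : Finset (ι → M)) :
    suppUnion (Y ∪ Y') = suppUnion Y ∪ suppUnion Y' :=
  union_biUnion

/-- Connectedness of `Y` from `z` through overlapping supports, in the closure form that the
greedy argument uses. -/
def OverlapConnected (Y : Finset (ι → M)) (z : ι → M) : Prop :=
  ∀ T : Finset ι, supp z ⊆ T → (∀ y ∈ Y, ¬Disjoint (supp y) T → supp y ⊆ T) →
    suppUnion Y ⊆ T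

def isolated (Y : Finset (ι → M)) : Finset (ι → M) :=
  {y ∈ Y | ∀ z ∈ Y, ¬Disjoint (supp y) (supp z) → z = y}

lemma mem_isolated {y : ι → M} :
    y ∈ isolated Y ↔ y ∈ Y ∧ ∀ z ∈ Y, ¬Disjoint (supp y) (supp z) → z = y :=
  mem_filter

lemma isolated_subset (Y : Finset (ι → M)) : isolated Y ⊆ Y := filter_subset _ _

lemma card_mul_card_isolated_le {w : ℕ} (hw : ∀ y ∈ Y, #(supp y) = w) :
    w * #(isolated Y) ≤ #(suppUnion Y) := by
  have hdisj : (isolated Y : Set (ι → M)).PairwiseDisjoint supp := by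
    intro y hy y' hy' hne
    rw [mem_coe, mem_isolated] at hy hy'
    by_contra h
    exact hne (hy.2 y' hy'.1 h).symm
  calc w * #(isolated Y) = #((isolated Y).biUnion supp) := by
        rw [card_biUnion hdisj, sum_const_nat fun y hy => hw y (isolated_subset Y hy), mul_comm]
    _ ≤ #(suppUnion Y) :=
      card_le_card (biUnion_subset_biUnion_of_subset_left _ (isolated_subset Y))

lemma disjoint_suppUnion_component :
    Disjoint (suppUnion (component Y z)) (suppUnion (Y \ component Y z)) := by
  rw [disjoint_left]
  intro j hj hj'
  obtain ⟨y, hy, hyj⟩ := mem_suppUnion.1 hj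
  obtain ⟨x, hx, hxj⟩ := mem_suppUnion.1 hj'
  have hxy : ¬Disjoint (supp y) (supp x) :=
    not_disjoint_iff.2 ⟨j, mem_supp.2 hyj, mem_supp.2 hxj⟩
  exact (mem_sdiff.1 hx).2 (mem_component_of_not_disjoint hy (mem_sdiff.1 hx).1 hxy)

lemma overlapConnected_component : OverlapConnected (component Y z) z := by
  intro T hzT hT
  refine biUnion_subset.2 fun y hy => ?_
  induction (mem_component.1 hy).2 with
  | refl => exact hzT
  | tail hzb hbc ih =>
    exact hT _ (mem_component.2 ⟨hbc.2.1, hzb.tail hbc⟩)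
      fun hcT => hbc.2.2 (hcT.mono_right (ih (mem_component.2 ⟨hbc.1, hzb⟩))).symm

lemma isolated_sdiff_component_subset : isolated (Y \ component Y z) ⊆ isolated Y := by
  intro y hy
  rw [mem_isolated, mem_sdiff] at hy
  rw [mem_isolated]
  obtain ⟨⟨hyY, hyK⟩, hy⟩ := hy
  refine ⟨hyY, fun x hx hxy => hy x (mem_sdiff.2 ⟨hx, fun hxK => ?_⟩) hxy⟩
  exact hyK (mem_component_of_not_disjoint hxK hyY fun h => hxy h.symm)

lemma mem_isolated_of_component_eq (hz : z ∈ Y) (h : component Y z = {z}) :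
    z ∈ isolated Y :=
  mem_isolated.2 ⟨hz, fun _ hx hzx => mem_singleton.1 <|
    h ▸ mem_component_of_not_disjoint (self_mem_component hz) hx hzx⟩

def isolatedErasures (Y : Finset (ι → M)) : Finset (ι → M) :=
  ((isolated Y).sigma supp).image fun p => Function.update p.1 p.2 0

lemma mem_isolatedErasures {v : ι → M} :
    v ∈ isolatedErasures Y ↔
      ∃ y ∈ isolated Y, ∃ i ∈ supp y, Function.update y i 0 = v := by
  simp [isolatedErasures, and_assoc]

lemma card_isolatedErasures {w : ℕ} (hw : ∀ y ∈ Y, #(supp y) = w)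
    (hw2 : 2 ≤ w) : #(isolatedErasures Y) = w * #(isolated Y) := by
  rw [isolatedErasures, card_image_of_injOn, card_sigma,
    sum_const_nat fun y hy => hw y (isolated_subset Y hy), mul_comm]
  rintro ⟨y, i⟩ hyi ⟨y', i'⟩ hyi' h
  simp only [coe_sigma, Set.mem_sigma_iff, mem_coe] at hyi hyi' h
  have hs := congrArg supp h
  rw [supp_update_zero, supp_update_zero] at hs
  obtain ⟨j, hj⟩ : ((supp y).erase i).Nonempty :=
    card_pos.1 (by rw [card_erase_of_mem hyi.2, hw y (isolated_subset Y hyi.1)]; omega)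
  have hj' : j ∈ (supp y').erase i' := hs ▸ hj
  obtain rfl : y' = y := (mem_isolated.1 hyi.1).2 y' (isolated_subset Y hyi'.1)
    (not_disjoint_iff.2 ⟨j, mem_of_mem_erase hj, mem_of_mem_erase hj'⟩)
  obtain rfl := (erase_inj _ hyi.2).1 hs
  rfl

end Support

section Span

variable {F : Type*} [Field F]

lemma finrank_span_insert {V : Type*} [AddCommGroup V] [Module F V] [FiniteDimensional F V]
    {s : Set V} {v : V} (hv : v ∉ span F s) :
    finrank F (span F (insert v s)) = finrank F (span F s) + 1 := by
  rw [span_insert, sup_comm, finrank_sup_span_singleton hv]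

variable [DecidableEq F] [DecidableEq ι]

lemma apply_eq_zero_of_mem_span {Y : Finset (ι → F)} {x : ι → F}
    (hx : x ∈ span F (Y : Set (ι → F))) {j : ι} (hj : j ∉ suppUnion Y) : x j = 0 := by
  induction hx using span_induction with
  | mem y hy => by_contra h; exact hj (mem_suppUnion.2 ⟨y, hy, h⟩)
  | zero => rfl
  | add _ _ _ _ hu hv => simp [hu, hv]
  | smul _ _ _ hu => simp [hu]

lemma finrank_span_add_finrank_span_of_disjoint {Y Y' : Finset (ι → F)}
    (h : Disjoint (suppUnion Y) (suppUnion Y')) :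
    finrank F (span F (Y : Set (ι → F))) + finrank F (span F (Y' : Set (ι → F))) =
      finrank F (span F ((Y ∪ Y' : Finset (ι → F)) : Set (ι → F))) := by
  have hinf : span F (Y : Set (ι → F)) ⊓ span F (Y' : Set (ι → F)) = ⊥ := by
    refine eq_bot_iff.2 fun x hx => (mem_bot F).2 (funext fun j => ?_)
    by_cases hj : j ∈ suppUnion Y
    · exact apply_eq_zero_of_mem_span hx.2 (disjoint_left.1 h hj)
    · exact apply_eq_zero_of_mem_span hx.1 hj
  rw [coe_union, span_union, ← finrank_sup_add_finrank_inf_eq, hinf, finrank_bot, add_zero]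

variable {Y : Finset (ι → F)} {z : ι → F} {w : ℕ}

/-- Greedy growth of `G`: a vector meeting the covered coordinates `suppUnion G` without lying
inside them adds at most `w` new coordinates and is independent of `G`. -/
lemma card_suppUnion_le_of_overlapConnected_of_subset (hw : ∀ y ∈ Y, #(supp y) ≤ w + 1)
    (hconn : OverlapConnected Y z)
    (G : Finset (ι → F)) (hGY : G ⊆ Y) (hzG : z ∈ G)
    (hG : #(suppUnion G) ≤ w * finrank F (span F (G : Set (ι → F))) + 1) :
    #(suppUnion Y) ≤ w * finrank F (span F (Y : Set (ι → F))) + 1 := by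
  by_cases hYG : suppUnion Y ⊆ suppUnion G
  · calc #(suppUnion Y) ≤ #(suppUnion G) := card_le_card hYG
      _ ≤ w * finrank F (span F (G : Set (ι → F))) + 1 := hG
      _ ≤ w * finrank F (span F (Y : Set (ι → F))) + 1 := by
        gcongr; exact finrank_mono (span_mono (coe_subset.2 hGY))
  obtain ⟨y, hyY, hmeet, hnew⟩ :
      ∃ y ∈ Y, ¬Disjoint (supp y) (suppUnion G) ∧ ¬supp y ⊆ suppUnion G := by
    by_contra! h
    exact hYG (hconn _ (supp_subset_suppUnion hzG) h)
  obtain ⟨j, hjy, hjG⟩ := not_subset.1 hnew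
  have hyG : y ∉ span F (G : Set (ι → F)) := fun h =>
    mem_supp.1 hjy (apply_eq_zero_of_mem_span h hjG)
  have hcard : #(suppUnion (insert y G)) ≤ #(suppUnion G) + w := by
    have hunion := card_union_add_card_inter (supp y) (suppUnion G)
    have hinter := (not_disjoint_iff_nonempty_inter.1 hmeet).card_pos
    have hy := hw y hyY
    rw [show suppUnion (insert y G) = supp y ∪ suppUnion G from biUnion_insert]
    exact le_of_add_le_add_right (a := #(supp y ∩ suppUnion G)) (by omega)
  refine card_suppUnion_le_of_overlapConnected_of_subset hw hconn (insert y G)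
    (insert_subset hyY hGY) (mem_insert_of_mem hzG) ?_
  rw [coe_insert, finrank_span_insert hyG, mul_add_one]
  omega
termination_by #(Y \ G)
decreasing_by
  rw [sdiff_insert]
  exact card_erase_lt_of_mem (mem_sdiff.2 ⟨hyY, fun h => hnew (supp_subset_suppUnion h)⟩)

lemma card_suppUnion_le_of_overlapConnected (hw : ∀ y ∈ Y, #(supp y) ≤ w + 1) (hz : z ∈ Y)
    (hconn : OverlapConnected Y z) :
    #(suppUnion Y) ≤ w * finrank F (span F (Y : Set (ι → F))) + 1 := by
  refine card_suppUnion_le_of_overlapConnected_of_subset hw hconn {z} (singleton_subset_iff.2 hz)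
    (mem_singleton_self z) ?_
  rcases eq_or_ne z 0 with rfl | hz0
  · simp [suppUnion, supp]
  · rw [coe_singleton, finrank_span_singleton hz0, suppUnion, singleton_biUnion]
    simpa using hw z hz

end Span

section Hamming

variable {R : Type*} [Ring R] [DecidableEq R]

lemma eq_of_sub_mem_of_hammingNorm_add_lt {C : Submodule R (ι → R)} {d : ℕ}
    (hC : ∀ c ∈ C, c ≠ 0 → d ≤ hammingNorm c) {x y : ι → R}
    (hxy : hammingNorm x + hammingNorm y < d) (h : x - y ∈ C) : x = y := by
  by_contra hne
  have hd := hC _ h (sub_ne_zero.2 hne)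
  have htri := hammingDist_triangle y 0 x
  rw [hammingDist_eq_hammingNorm y x, neg_add_eq_sub, hammingDist_zero_right,
    hammingDist_zero_left] at htri
  omega

end Hamming

section Dual

variable {F : Type*} [Field F]

theorem card_le_pow_finrank_sub {V : Type*} [AddCommGroup V] [Module F V] [Finite F]
    [FiniteDimensional F V] {p q : Submodule F V} (hpq : p ≤ q) {s : Finset V}
    (hs : ∀ x ∈ s, x ∈ q) (hsep : ∀ x ∈ s, ∀ y ∈ s, x - y ∈ p → x = y) :
    #s ≤ Nat.card F ^ (finrank F q - finrank F p) := by
  set p' := p.comap q.subtype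
  have hinj : Function.Injective fun x : s => p'.mkQ ⟨x, hs x x.2⟩ := fun x y hxy =>
    Subtype.ext (hsep _ x.2 _ y.2 ((Submodule.Quotient.eq p').1 hxy))
  have hp' : finrank F p' = finrank F p := (comapSubtypeEquivOfLe hpq).finrank_eq
  have : Finite (q ⧸ p') := Module.finite_of_finite F
  calc #s = Nat.card s := (Nat.card_eq_finsetCard s).symm
    _ ≤ Nat.card (q ⧸ p') := Nat.card_le_card_of_injective _ hinj
    _ = Nat.card F ^ (finrank F q - finrank F p) := by
      rw [Module.natCard_eq_pow_finrank (K := F), finrank_quotient, hp']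

variable [DecidableEq ι]

def dotOrth (W : Submodule F (ι → F)) : Submodule F (ι → F) :=
  (W.map (dotProductEquiv F ι).toLinearMap).dualCoannihilator

lemma mem_dotOrth {W : Submodule F (ι → F)} {v : ι → F} :
    v ∈ dotOrth W ↔ ∀ w ∈ W, w ⬝ᵥ v = 0 := by
  rw [dotOrth, mem_dualCoannihilator]
  refine ⟨fun h w hw => by simpa using h _ (mem_map_of_mem hw), ?_⟩
  rintro h _ ⟨w, hw, rfl⟩
  simpa using h w hw

lemma mem_dotOrth_span {Y : Set (ι → F)} {v : ι → F} :
    v ∈ dotOrth (span F Y) ↔ ∀ y ∈ Y, y ⬝ᵥ v = 0 := by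
  rw [mem_dotOrth]
  refine ⟨fun h y hy => h y (subset_span hy), fun h w hw => ?_⟩
  induction hw using span_induction with
  | mem y hy => exact h y hy
  | zero => exact zero_dotProduct v
  | add _ _ _ _ hu hu' => rw [add_dotProduct, hu, hu', add_zero]
  | smul _ _ _ hu => rw [smul_dotProduct, hu, smul_zero]

lemma finrank_add_finrank_dotOrth (W : Submodule F (ι → F)) :
    finrank F W + finrank F (dotOrth W) = Fintype.card ι := by
  rw [dotOrth, ← LinearEquiv.finrank_map_eq (dotProductEquiv F ι) W,
    Subspace.finrank_add_finrank_dualCoannihilator_eq, Module.finrank_fintype_fun_eq_card]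

end Dual

section Binary

lemma ne_zero_of_card_supp_eq_three {z : ι → ZMod 2} (hz : #(supp z) = 3) : z ≠ 0 :=
  supp_nonempty_iff.1 (card_pos.1 (by rw [hz]; norm_num))

lemma two_le_finrank_span {V : Type*} [AddCommGroup V] [Module (ZMod 2) V]
    [FiniteDimensional (ZMod 2) V] {s : Set V} {x y : V} (hx : x ∈ s) (hy : y ∈ s)
    (hx0 : x ≠ 0) (hy0 : y ≠ 0) (hxy : x ≠ y) : 2 ≤ finrank (ZMod 2) (span (ZMod 2) s) := by
  have hyx : y ∉ span (ZMod 2) {x} := by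
    rw [mem_span_singleton]
    rintro ⟨a, rfl⟩
    obtain rfl | rfl : a = 0 ∨ a = 1 := (by decide : ∀ b : ZMod 2, b = 0 ∨ b = 1) a
    · exact hy0 (zero_smul _ x)
    · exact hxy (one_smul _ x).symm
  calc 2 = finrank (ZMod 2) (span (ZMod 2) {x}) + 1 := by rw [finrank_span_singleton hx0]
    _ = finrank (ZMod 2) (span (ZMod 2) (insert y {x})) := (finrank_span_insert hyx).symm
    _ ≤ finrank (ZMod 2) (span (ZMod 2) s) :=
      finrank_mono (span_mono (Set.insert_subset hy (Set.singleton_subset_iff.2 hx)))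

variable [DecidableEq ι]

lemma two_mul_card_suppUnion_component_le {Y : Finset (ι → ZMod 2)} {z : ι → ZMod 2}
    (h3 : ∀ y ∈ Y, #(supp y) = 3) (hz : z ∈ Y) (hKz : component Y z ≠ {z}) :
    2 * #(suppUnion (component Y z)) ≤
      5 * finrank (ZMod 2) (span (ZMod 2) (component Y z : Set (ι → ZMod 2))) := by
  have hzK := self_mem_component hz
  obtain ⟨z', hz'K, hz'z⟩ : ∃ z' ∈ component Y z, z' ≠ z := by
    by_contra! h
    exact hKz (eq_singleton_iff_unique_mem.2 ⟨hzK, h⟩)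
  have hrank : 2 ≤ finrank (ZMod 2) (span (ZMod 2) (component Y z : Set (ι → ZMod 2))) :=
    two_le_finrank_span (mem_coe.2 hzK) (mem_coe.2 hz'K) (ne_zero_of_card_supp_eq_three (h3 z hz))
      (ne_zero_of_card_supp_eq_three (h3 z' (component_subset hz'K))) hz'z.symm
  have hcard := card_suppUnion_le_of_overlapConnected (w := 2)
    (fun y hy => (h3 y (component_subset hy)).le) hzK overlapConnected_component
  omega

theorem two_mul_card_suppUnion_le (Y : Finset (ι → ZMod 2)) (h3 : ∀ y ∈ Y, #(supp y) = 3) :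
    2 * #(suppUnion Y) ≤
      5 * finrank (ZMod 2) (span (ZMod 2) (Y : Set (ι → ZMod 2))) + #(isolated Y) := by
  induction Y using Finset.strongInduction with
  | H Y ih =>
  obtain rfl | ⟨z, hz⟩ := Y.eq_empty_or_nonempty
  · simp [suppUnion]
  set K := component Y z
  have hzK : z ∈ K := self_mem_component hz
  have hsplit : K ∪ (Y \ K) = Y := union_sdiff_of_subset component_subset
  have hdisj : Disjoint (suppUnion K) (suppUnion (Y \ K)) := disjoint_suppUnion_component
  have hcard : #(suppUnion Y) = #(suppUnion K) + #(suppUnion (Y \ K)) := by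
    rw [← card_union_of_disjoint hdisj, ← suppUnion_union, hsplit]
  have hrank := finrank_span_add_finrank_span_of_disjoint hdisj
  rw [hsplit] at hrank
  have hiso : isolated (Y \ K) ⊆ isolated Y := isolated_sdiff_component_subset
  have hrest := ih (Y \ K) (sdiff_ssubset component_subset ⟨z, hzK⟩)
    fun y hy => h3 y (mem_sdiff.1 hy).1
  by_cases hKz : K = {z}
  · have hisoz : #(isolated (Y \ K)) + 1 ≤ #(isolated Y) := by
      rw [← card_insert_of_notMem fun h => (mem_sdiff.1 (isolated_subset _ h)).2 hzK]
      exact card_le_card (insert_subset (mem_isolated_of_component_eq hz hKz) hiso)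
    have hSK : #(suppUnion K) = 3 := by rw [hKz, suppUnion, singleton_biUnion, h3 z hz]
    have hrK : finrank (ZMod 2) (span (ZMod 2) (K : Set (ι → ZMod 2))) = 1 := by
      rw [hKz, coe_singleton, finrank_span_singleton (ne_zero_of_card_supp_eq_three (h3 z hz))]
    omega
  · have : 2 * #(suppUnion K) ≤ 5 * finrank (ZMod 2) (span (ZMod 2) (K : Set (ι → ZMod 2))) :=
      two_mul_card_suppUnion_component_le h3 hz hKz
    have := card_le_card hiso
    omega

lemma dotProduct_eq_card_inter_supp (x y : ι → ZMod 2) : x ⬝ᵥ y = #(supp x ∩ supp y) := by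
  have h : ∀ a b : ZMod 2, a * b = if a ≠ 0 ∧ b ≠ 0 then 1 else 0 := by decide
  simp only [dotProduct, h, sum_boole]
  congr 2
  ext j
  simp

lemma dotProduct_update_zero_eq_zero {Y : Finset (ι → ZMod 2)} {y z : ι → ZMod 2} {i : ι}
    (hy : y ∈ isolated Y) (hodd : Odd #(supp y)) (hi : i ∈ supp y) (hz : z ∈ Y) :
    z ⬝ᵥ Function.update y i 0 = 0 := by
  rw [dotProduct_eq_card_inter_supp, supp_update_zero]
  by_cases hzy : z = y
  · rw [hzy, inter_eq_right.2 (erase_subset i _), card_erase_of_mem hi,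
      ZMod.natCast_eq_zero_iff_even]
    exact Nat.Odd.sub_odd hodd odd_one
  · have hdisj : Disjoint (supp y) (supp z) := by
      by_contra h
      exact hzy ((mem_isolated.1 hy).2 z hz h)
    rw [disjoint_iff_inter_eq_empty.1 (hdisj.symm.mono_right (erase_subset i _)), card_empty,
      Nat.cast_zero]

theorem three_mul_card_isolated_add_one_le (C : Submodule (ZMod 2) (ι → ZMod 2))
    (hC : ∀ c ∈ C, c ≠ 0 → 5 ≤ hammingNorm c) (Y : Finset (ι → ZMod 2))
    (h3 : ∀ y ∈ Y, #(supp y) = 3)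
    (hCY : C ≤ dotOrth (span (ZMod 2) (Y : Set (ι → ZMod 2)))) :
    3 * #(isolated Y) + 1 ≤
      2 ^ (finrank (ZMod 2) (dotOrth (span (ZMod 2) (Y : Set (ι → ZMod 2)))) -
        finrank (ZMod 2) C) := by
  have herase : ∀ v ∈ isolatedErasures Y,
      hammingNorm v = 2 ∧ v ∈ dotOrth (span (ZMod 2) (Y : Set (ι → ZMod 2))) := by
    intro v hv
    obtain ⟨y, hy, i, hi, rfl⟩ := mem_isolatedErasures.1 hv
    have hy3 := h3 y (isolated_subset Y hy)
    refine ⟨by rw [hammingNorm_eq_card_supp, supp_update_zero, card_erase_of_mem hi, hy3], ?_⟩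
    exact mem_dotOrth_span.2 fun z hz =>
      dotProduct_update_zero_eq_zero hy (by rw [hy3]; decide) hi hz
  have h0 : (0 : ι → ZMod 2) ∉ isolatedErasures Y := fun h => by
    simpa using (herase 0 h).1
  have hwt : ∀ v ∈ insert 0 (isolatedErasures Y), hammingNorm v ≤ 2 := by
    simp only [mem_insert, forall_eq_or_imp, hammingNorm_zero, zero_le, true_and]
    exact fun v hv => (herase v hv).1.le
  calc 3 * #(isolated Y) + 1 = #(insert 0 (isolatedErasures Y)) := by
        rw [card_insert_of_notMem h0, card_isolatedErasures h3 (by norm_num)]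
    _ ≤ Nat.card (ZMod 2) ^ _ := by
      refine card_le_pow_finrank_sub hCY ?_ fun x hx y hy =>
        eq_of_sub_mem_of_hammingNorm_add_lt hC (by linarith [hwt x hx, hwt y hy])
      simp only [mem_insert, forall_eq_or_imp]
      exact ⟨zero_mem _, fun v hv => (herase v hv).2⟩
    _ = _ := by rw [Nat.card_zmod]

end Binary

lemma thirty_mul_add_two_le_two_pow {m : ℕ} (hm : 10 ≤ m) : 30 * m + 2 ≤ 2 ^ m := by
  induction m, hm using Nat.le_induction with
  | base => norm_num
  | succ n _ ih => rw [pow_succ]; omega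

lemma le_two_mul_div_three_sub_of_bounds {m r a k t : ℕ} (hm : Even m) (hm8 : 8 < m)
    (hr : 2 * (2 ^ m - 1) ≤ 5 * r + a) (ha : 3 * a ≤ 2 ^ m - 1) (ht : 3 * a + 1 ≤ 2 ^ t)
    (hk : r + (k + t) = 2 ^ m - 1) : k ≤ 2 * (2 ^ m - 1) / 3 - m := by
  obtain ⟨c, rfl⟩ := hm
  have hdvd : 3 ∣ 2 ^ (c + c) - 1 := by
    rw [← two_mul, pow_mul]
    simpa using Nat.sub_dvd_pow_sub_pow 4 1 c
  have hbig := thirty_mul_add_two_le_two_pow (m := c + c) (by omega)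
  have hhalf : 2 ^ (c + c) = 2 * 2 ^ (c + c - 1) := by
    rw [← pow_succ']; congr 1; omega
  rcases lt_or_ge (2 ^ (c + c - 1)) (3 * a + 1) with h | h
  · have : c + c - 1 < t := (Nat.pow_lt_pow_iff_right (by norm_num)).1 (h.trans_le ht)
    omega
  · omega

end LRC

open LRC

theorem dimension_bound_d6_locality2_general
    (m : ℕ) (hm : Even m) (hm8 : 8 < m)
    (C : Submodule (ZMod 2) (Fin (2 ^ m - 1) → ZMod 2))
    -- minimum distance is `6`
    (hd : ∀ c ∈ C, c ≠ 0 → 6 ≤ hammingNorm c)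
    -- locality `2`: every coordinate lies in the support of a weight-3
    -- dual codeword
    (hloc : ∀ i : Fin (2 ^ m - 1), ∃ y : Fin (2 ^ m - 1) → ZMod 2,
        (∀ x ∈ C, ∑ j, x j * y j = 0) ∧ hammingNorm y = 3 ∧ y i ≠ 0) :
    Module.finrank (ZMod 2) C ≤ 2 * (2 ^ m - 1) / 3 - m := by
  classical
  set Y : Finset (Fin (2 ^ m - 1) → ZMod 2) :=
    {y | hammingNorm y = 3 ∧ ∀ x ∈ C, x ⬝ᵥ y = 0}
  have h3 : ∀ y ∈ Y, #(supp y) = 3 := fun y hy => (mem_filter.1 hy).2.1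
  have hcover : suppUnion Y = univ := eq_univ_of_forall fun i => by
    obtain ⟨y, hyC, hy3, hyi⟩ := hloc i
    exact mem_suppUnion.2 ⟨y, mem_filter.2 ⟨mem_univ y, hy3, hyC⟩, hyi⟩
  have hCY : C ≤ dotOrth (span (ZMod 2) (Y : Set (Fin (2 ^ m - 1) → ZMod 2))) := fun x hx =>
    mem_dotOrth_span.2 fun y hy => by rw [dotProduct_comm]; exact (mem_filter.1 hy).2.2 x hx
  have hpack := three_mul_card_isolated_add_one_le C
    (fun c hc hc0 => (hd c hc hc0).trans' (by norm_num)) Y h3 hCY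
  have hrank := two_mul_card_suppUnion_le Y h3
  have hiso := card_mul_card_isolated_le h3
  have hdim := finrank_add_finrank_dotOrth (span (ZMod 2) (Y : Set (Fin (2 ^ m - 1) → ZMod 2)))
  have hCD := Submodule.finrank_mono hCY
  rw [hcover, card_univ, Fintype.card_fin] at hrank hiso
  rw [Fintype.card_fin] at hdim
  exact le_two_mul_div_three_sub_of_bounds hm hm8 hrank hiso hpack (by omega)

/-- Dimension bound for binary linear codes of length `2^m - 1`, minimum
distance `6` and locality `2` (no disjoint-repair-group assumption), for even
`m > 8`: `k ≤ (2/3)(2^m - 1) - m`. -/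
theorem dimension_bound_d6_locality2
    (m : ℕ) (hm : Even m) (hm8 : 8 < m)
    (C : Submodule (ZMod 2) (Fin (2 ^ m - 1) → ZMod 2))
    -- minimum distance is `6`
    (hd : ∀ c ∈ C, c ≠ 0 → 6 ≤ hammingNorm c)
    (hd' : ∃ c ∈ C, c ≠ 0 ∧ hammingNorm c = 6)
    -- locality `2`: every coordinate lies in the support of a weight-3
    -- dual codeword
    (hloc : ∀ i : Fin (2 ^ m - 1), ∃ y : Fin (2 ^ m - 1) → ZMod 2,
        (∀ x ∈ C, ∑ j, x j * y j = 0) ∧ hammingNorm y = 3 ∧ y i ≠ 0) :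
    Module.finrank (ZMod 2) C ≤ 2 * (2 ^ m - 1) / 3 - m :=
  dimension_bound_d6_locality2_general m hm hm8 C hd hloc
end

section
/- Let m be divisible by 3 and n = 2^m - 1 (so 7 | n). The binary cyclic code C of length n with check polynomial h(x) = 1 + x^{n/7} + x^{3n/7} has dimension k = 3n/7 and every coordinate i has 3 parity checks of weight 3 in C⊥ that pairwise intersect exactly in {i}: C is a 3-available-2-local LRC. -/
open Polynomial

/-!
Write `n = 7 s`. Over `𝔽₂` the polynomial `g = X^{4s} + X^{2s} + X^s + 1` satisfies
`g h = X^n - 1`, so a word `c` lies in `C` iff the monic `g` divides `c(X)`; these words form the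
kernel of the surjection `c ↦ c(X) mod g` onto `𝔽₂[X]/(g)`, hence `dim C = n - 4s = 3s`.

Reading `c(X) h(X) ≡ 0 mod X^n - 1` coefficientwise gives the weight-3 checks
`c_k + c_{k-s} + c_{k-3s} = 0` for every `k`. On the seven coordinates `i + u s`, `u ∈ ℤ/7`,
their supports are the lines of the cyclic Fano plane, the translates of `-{0, 1, 3}`; since
`{0, 1, 3}` is a perfect difference set mod 7, the three lines through `i` meet pairwise only
at `i`.
-/

section Words

variable {n : ℕ}

theorem wordToPoly_eq_degreeLTEquiv_symm (c : Fin n → ZMod 2) :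
    wordToPoly c = ((degreeLTEquiv (ZMod 2) n).symm c : (ZMod 2)[X]) := by
  simp [wordToPoly, degreeLTEquiv, C_mul_X_pow_eq_monomial]

theorem wordToPoly_mem_degreeLT (c : Fin n → ZMod 2) : wordToPoly c ∈ degreeLT (ZMod 2) n := by
  rw [wordToPoly_eq_degreeLTEquiv_symm]
  exact Submodule.coe_mem _

theorem natDegree_wordToPoly_lt (hn : 0 < n) (c : Fin n → ZMod 2) :
    (wordToPoly c).natDegree < n := by
  have := mem_degreeLT.mp (wordToPoly_mem_degreeLT c)
  by_cases h0 : wordToPoly c = 0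
  · simpa [h0]
  · exact (natDegree_lt_iff_degree_lt h0).mpr this

theorem coeff_wordToPoly (c : Fin n → ZMod 2) (j : Fin n) : (wordToPoly c).coeff j = c j := by
  rw [wordToPoly_eq_degreeLTEquiv_symm]
  exact congrFun ((degreeLTEquiv (ZMod 2) n).apply_symm_apply c) j

theorem coeff_wordToPoly_of_le (c : Fin n → ZMod 2) {j : ℕ} (hj : n ≤ j) :
    (wordToPoly c).coeff j = 0 :=
  coeff_eq_zero_of_degree_lt ((mem_degreeLT.mp (wordToPoly_mem_degreeLT c)).trans_le
    (by exact_mod_cast hj))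

theorem exists_wordToPoly_eq {p : (ZMod 2)[X]} (hp : p.degree < n) :
    ∃ c : Fin n → ZMod 2, wordToPoly c = p :=
  ⟨degreeLTEquiv (ZMod 2) n ⟨p, mem_degreeLT.mpr hp⟩, by
    rw [wordToPoly_eq_degreeLTEquiv_symm, LinearEquiv.symm_apply_apply]⟩

variable (n) in
noncomputable def wordToPolyₗ : (Fin n → ZMod 2) →ₗ[ZMod 2] (ZMod 2)[X] :=
  (degreeLT (ZMod 2) n).subtype ∘ₗ (degreeLTEquiv (ZMod 2) n).symm.toLinearMap

theorem wordToPolyₗ_apply (c : Fin n → ZMod 2) : wordToPolyₗ n c = wordToPoly c :=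
  (wordToPoly_eq_degreeLTEquiv_symm c).symm

end Words

section Dimension

variable {n : ℕ}

variable (n) in
noncomputable def residueₗ (g : (ZMod 2)[X]) :
    (Fin n → ZMod 2) →ₗ[ZMod 2] (ZMod 2)[X] ⧸ Ideal.span {g} :=
  (Ideal.Quotient.mkₐ (ZMod 2) (Ideal.span {g})).toLinearMap ∘ₗ wordToPolyₗ n

theorem mem_ker_residueₗ {g : (ZMod 2)[X]} {c : Fin n → ZMod 2} :
    c ∈ LinearMap.ker (residueₗ n g) ↔ g ∣ wordToPoly c := by
  simp [residueₗ, wordToPolyₗ_apply, Ideal.Quotient.eq_zero_iff_mem, Ideal.mem_span_singleton]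

theorem residueₗ_surjective {g : (ZMod 2)[X]} (hg : g.Monic) (hgn : g.natDegree ≤ n) :
    Function.Surjective (residueₗ n g) := by
  rintro ⟨p⟩
  obtain ⟨c, hc⟩ := exists_wordToPoly_eq (n := n) ((degree_modByMonic_lt p hg).trans_le
    (degree_le_of_natDegree_le hgn))
  refine ⟨c, (Ideal.Quotient.mk_eq_mk_iff_sub_mem _ _).mpr ?_⟩
  rw [wordToPolyₗ_apply, hc, Ideal.mem_span_singleton]
  exact ⟨-(p /ₘ g), by linear_combination modByMonic_add_div p g⟩

theorem finrank_ker_residueₗ {g : (ZMod 2)[X]} (hg : g.Monic) (hgn : g.natDegree ≤ n) :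
    Module.finrank (ZMod 2) (LinearMap.ker (residueₗ n g)) = n - g.natDegree := by
  have := (residueₗ n g).finrank_range_add_finrank_ker
  rw [LinearMap.range_eq_top.mpr (residueₗ_surjective hg hgn), finrank_top,
    finrank_quotient_span_eq_natDegree, Module.finrank_fin_fun] at this
  omega

theorem finrank_cyclicCode {g h : (ZMod 2)[X]} (hn : 0 < n) (hg : g.Monic)
    (hgh : g * h = X ^ n - 1) (C : Submodule (ZMod 2) (Fin n → ZMod 2))
    (hC : ∀ c, c ∈ C ↔ (X ^ n - 1 : (ZMod 2)[X]) ∣ wordToPoly c * h) :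
    Module.finrank (ZMod 2) C = h.natDegree := by
  have hXn : (X ^ n - 1 : (ZMod 2)[X]).natDegree = n := by rw [← C_1, natDegree_X_pow_sub_C]
  have hh : h ≠ 0 :=
    right_ne_zero_of_mul (by rw [hgh, ← C_1]; exact X_pow_sub_C_ne_zero hn 1)
  have hdeg : g.natDegree + h.natDegree = n := by rw [← hXn, ← hgh, hg.natDegree_mul' hh]
  have hCker : C = LinearMap.ker (residueₗ n g) := by
    ext c
    rw [hC, mem_ker_residueₗ, ← hgh, mul_dvd_mul_iff_right hh]
  rw [hCker, finrank_ker_residueₗ hg (by omega)]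
  omega

end Dimension

section Checks

-- For `deg P < 2n`, `P_k + P_{k+n}` is the `k`-th coefficient of `P mod (X^n - 1)`.
theorem coeff_add_coeff_add_eq_zero_of_dvd {R : Type*} [CommRing R] [Nontrivial R] {n : ℕ}
    {P : R[X]} (hdvd : X ^ n - 1 ∣ P) (hP : P.natDegree < 2 * n) {k : ℕ} (hk : k < n) :
    P.coeff k + P.coeff (k + n) = 0 := by
  obtain ⟨q, rfl⟩ := hdvd
  have hmonic : (X ^ n - 1 : R[X]).Monic := monic_X_pow_sub_C 1 (by omega)
  have hq : q.coeff (k + n) = 0 := by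
    rcases eq_or_ne q 0 with rfl | hq0
    · simp
    rw [hmonic.natDegree_mul' hq0, ← C_1, natDegree_X_pow_sub_C] at hP
    exact coeff_eq_zero_of_natDegree_lt (by omega)
  simp only [sub_mul, one_mul, coeff_sub, mul_comm (X ^ n), coeff_mul_X_pow',
    if_neg (by omega : ¬ n ≤ k), if_pos (by omega : n ≤ k + n), Nat.add_sub_cancel, hq]
  ring

variable {n : ℕ}

theorem coeff_wordToPoly_mul_X_pow_add (c : Fin n → ZMod 2) (k e : Fin n) :
    (wordToPoly c * X ^ (e : ℕ)).coeff k + (wordToPoly c * X ^ (e : ℕ)).coeff (k + n) =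
      c (k - e) := by
  rw [← coeff_wordToPoly c (k - e), coeff_mul_X_pow', coeff_mul_X_pow',
    if_pos (show (e : ℕ) ≤ k + n by omega)]
  rcases le_or_gt e k with hek | hke
  · have hek' : (e : ℕ) ≤ k := hek
    rw [if_pos hek', coeff_wordToPoly_of_le c (j := k + n - e) (by omega), add_zero,
      Fin.sub_val_of_le hek]
  · have hke' : (k : ℕ) < e := hke
    rw [if_neg (by omega), zero_add, Fin.coe_sub_iff_lt.mpr hke]
    congr 1
    omega

theorem sum_apply_sub_eq_zero_of_dvd {ι : Type*} [Fintype ι] (E : ι → Fin n)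
    (c : Fin n → ZMod 2) (hdvd : X ^ n - 1 ∣ wordToPoly c * ∑ a, X ^ (E a : ℕ))
    (k : Fin n) :
    ∑ a, c (k - E a) = 0 := by
  have hn : 0 < n := k.pos
  have hdeg : (wordToPoly c * ∑ a, X ^ (E a : ℕ)).natDegree < 2 * n := by
    have h1 := natDegree_wordToPoly_lt hn c
    have h2 : (∑ a, X ^ (E a : ℕ) : (ZMod 2)[X]).natDegree ≤ n - 1 :=
      natDegree_sum_le_of_forall_le _ _ fun a _ => (natDegree_X_pow_le _).trans (by omega)
    have := natDegree_mul_le (p := wordToPoly c) (q := ∑ a, X ^ (E a : ℕ))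
    omega
  rw [← coeff_add_coeff_add_eq_zero_of_dvd hdvd hdeg k.isLt]
  simp only [Finset.mul_sum, finsetSum_coeff, ← Finset.sum_add_distrib,
    coeff_wordToPoly_mul_X_pow_add]

end Checks

section Availability

def IsAvailableLocalAt {ι K : Type*} [Fintype ι] [CommRing K] [DecidableEq K]
    (C : Submodule K (ι → K)) (t r : ℕ) (i : ι) : Prop :=
  ∃ y : Fin t → (ι → K),
    (∀ a, (∀ x ∈ C, ∑ j, x j * y a j = 0) ∧ hammingNorm (y a) = r + 1 ∧ y a i ≠ 0) ∧
      ∀ a b, a ≠ b → ∀ j, y a j ≠ 0 → y b j ≠ 0 → j = i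

theorem hammingNorm_ite_mem {ι K : Type*} [Fintype ι] [DecidableEq ι] [Zero K] [One K]
    [NeZero (1 : K)] [DecidableEq K] (S : Finset ι) :
    hammingNorm (fun j => if j ∈ S then (1 : K) else 0) = S.card := by
  unfold hammingNorm
  congr 1
  ext j
  simp

theorem exists_injective_zmod_addMonoidHom {G : Type*} [AddCommGroup G] {p : ℕ} [Fact p.Prime]
    {σ : G} (hσp : p • σ = 0) (hσ : σ ≠ 0) :
    ∃ φ : ZMod p →+ G, Function.Injective φ ∧ φ 1 = σ := by
  set φ := ZMod.lift p ⟨zmultiplesHom G σ, by simpa using hσp⟩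
  have hφ1 : φ 1 = σ := by
    simpa using ZMod.lift_coe p ⟨zmultiplesHom G σ, by simpa using hσp⟩ 1
  refine ⟨φ, (injective_iff_map_eq_zero φ).mpr fun u hu => ?_, hφ1⟩
  by_contra hu0
  have hunit : (u⁻¹).val • u = 1 := by
    rw [nsmul_eq_mul, ZMod.natCast_zmod_val, inv_mul_cancel₀ hu0]
  apply hσ
  rw [← hφ1, ← hunit, map_nsmul, hu, smul_zero]

-- The support of the check at `t`; the lines through `0` are those with `t ∈ {0, 1, 3}`.
def fanoLine (t : ZMod 7) : Finset (ZMod 7) := {t, t - 1, t - 3}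

theorem card_fanoLine (t : ZMod 7) : (fanoLine t).card = 3 := by
  revert t
  decide

theorem sum_fanoLine {M : Type*} [AddCommMonoid M] (f : ZMod 7 → M) (t : ZMod 7) :
    ∑ u ∈ fanoLine t, f u = f t + f (t - 1) + f (t - 3) := by
  have h1 : t ∉ ({t - 1, t - 3} : Finset (ZMod 7)) := by revert t; decide
  have h3 : t - 1 ∉ ({t - 3} : Finset (ZMod 7)) := by revert t; decide
  rw [fanoLine, Finset.sum_insert h1, Finset.sum_insert h3, Finset.sum_singleton, add_assoc]

theorem zero_mem_fanoLine : ∀ a : Fin 3, 0 ∈ fanoLine (![0, 1, 3] a) := by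
  decide

theorem eq_zero_of_mem_fanoLine_of_mem_fanoLine :
    ∀ a b : Fin 3, a ≠ b →
      ∀ u ∈ fanoLine (![0, 1, 3] a), u ∈ fanoLine (![0, 1, 3] b) → u = 0 := by
  decide

theorem isAvailableLocalAt_of_add_sub_add_sub {G : Type*} [AddCommGroup G] [Fintype G]
    [DecidableEq G] (C : Submodule (ZMod 2) (G → ZMod 2)) {σ : G} (hσ7 : 7 • σ = 0)
    (hσ : σ ≠ 0)
    (hC : ∀ x ∈ C, ∀ k, x k + x (k - σ) + x (k - 3 • σ) = 0) (i : G) :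
    IsAvailableLocalAt C 3 2 i := by
  have : Fact (Nat.Prime 7) := ⟨by norm_num⟩
  obtain ⟨φ, hφ, hφ1⟩ := exists_injective_zmod_addMonoidHom hσ7 hσ
  have hφ3 : φ 3 = 3 • σ := by rw [← hφ1, ← map_nsmul]; norm_num
  let P : ZMod 7 ↪ G := ⟨fun u => i + φ u, fun u v h => hφ (add_left_cancel h)⟩
  have hP : ∀ t d, P (t - d) = P t - φ d := fun t d => by
    change i + φ (t - d) = i + φ t - φ d
    rw [map_sub, add_sub_assoc]
  have hP0 : P 0 = i := by
    change i + φ 0 = i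
    rw [map_zero, add_zero]
  let line : Fin 3 → Finset G := fun a => (fanoLine (![0, 1, 3] a)).map P
  refine ⟨fun a j => if j ∈ line a then 1 else 0, fun a => ⟨fun x hx => ?_, ?_, ?_⟩, ?_⟩
  · simp only [mul_boole, Finset.sum_ite_mem, Finset.univ_inter, line, Finset.sum_map,
      sum_fanoLine, hP, hφ1, hφ3]
    exact hC x hx _
  · rw [hammingNorm_ite_mem, Finset.card_map, card_fanoLine]
  · change (if i ∈ line a then (1 : ZMod 2) else 0) ≠ 0
    rw [if_pos (hP0 ▸ Finset.mem_map_of_mem P (zero_mem_fanoLine a))]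
    exact one_ne_zero
  · intro a b hab j hja hjb
    simp only [ne_eq, ite_eq_right_iff, one_ne_zero, imp_false, not_not] at hja hjb
    obtain ⟨u, hu, rfl⟩ := Finset.mem_map.mp hja
    obtain ⟨v, hv, hvu⟩ := Finset.mem_map.mp hjb
    rw [P.injective hvu] at hv
    rw [eq_zero_of_mem_fanoLine_of_mem_fanoLine a b hab u hu hv, hP0]

end Availability

section LengthSevenMul

variable {s : ℕ}

theorem natDegree_one_add_X_pow_add_X_pow (hs : 0 < s) :
    (1 + X ^ s + X ^ (3 * s) : (ZMod 2)[X]).natDegree = 3 * s := by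
  compute_degree!
  all_goals first | omega | simp [show s ≠ 0 by omega, show 3 * s ≠ s by omega]

theorem monic_X_pow_add_X_pow_add_X_pow_add_one (hs : 0 < s) :
    (X ^ (4 * s) + X ^ (2 * s) + X ^ s + 1 : (ZMod 2)[X]).Monic := by
  monicity!
  all_goals first
    | omega
    | simp [show s ≠ 0 by omega, show ¬ 4 * s ≤ s by omega, show s ≤ 4 * s by omega]

theorem X_pow_add_X_pow_add_X_pow_add_one_mul (s : ℕ) :
    (X ^ (4 * s) + X ^ (2 * s) + X ^ s + 1 : (ZMod 2)[X]) * (1 + X ^ s + X ^ (3 * s)) =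
      X ^ (7 * s) - 1 := by
  have h2 : (2 : (ZMod 2)[X]) = 0 := CharTwo.two_eq_zero
  simp only [mul_comm _ s, pow_mul]
  linear_combination ((X ^ s) ^ 5 + (X ^ s) ^ 4 + (X ^ s) ^ 3 + (X ^ s) ^ 2 + X ^ s + 1) * h2

theorem Fin.val_nsmul {n : ℕ} [NeZero n] (k : ℕ) (a : Fin n) :
    ((k • a : Fin n) : ℕ) = k * a % n := by
  induction k with
  | zero => simp
  | succ k ih => rw [succ_nsmul, Fin.val_add, ih, Nat.mod_add_mod, Nat.succ_mul]

theorem isAvailableLocalAt_of_dvd (hs : 0 < s) (C : Submodule (ZMod 2) (Fin (7 * s) → ZMod 2))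
    (hC : ∀ c ∈ C, (X ^ (7 * s) - 1 : (ZMod 2)[X]) ∣ wordToPoly c * (1 + X ^ s + X ^ (3 * s)))
    (i : Fin (7 * s)) : IsAvailableLocalAt C 3 2 i := by
  have : NeZero (7 * s) := ⟨by omega⟩
  let σ : Fin (7 * s) := ⟨s, by omega⟩
  have hσ3 : ((3 • σ : Fin (7 * s)) : ℕ) = 3 * s := by
    rw [Fin.val_nsmul]
    exact Nat.mod_eq_of_lt (show 3 * s < 7 * s by omega)
  refine isAvailableLocalAt_of_add_sub_add_sub C (σ := σ) ?_ ?_ (fun x hx k => ?_) i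
  · ext
    simp [Fin.val_nsmul, σ]
  · rw [ne_eq, Fin.ext_iff, Fin.val_zero]
    exact Nat.pos_iff_ne_zero.mp hs
  · have hx' : (X ^ (7 * s) - 1 : (ZMod 2)[X]) ∣
        wordToPoly x * ∑ a, X ^ ((![0, σ, 3 • σ] a : Fin (7 * s)) : ℕ) := by
      simpa [Fin.sum_univ_three, hσ3] using hC x hx
    simpa [Fin.sum_univ_three] using sum_apply_sub_eq_zero_of_dvd _ x hx' k

end LengthSevenMul

/-- For `3 ∣ m` and `n = 2^m - 1` (so `7 ∣ n`), the binary cyclic code with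
check polynomial `h(x) = 1 + x^{n/7} + x^{3n/7}` has dimension `3n/7` and is a
3-available-2-local LRC: every coordinate `i` has `3` weight-3 parity checks
whose supports pairwise intersect exactly in `{i}`. -/
theorem three_available_two_local_cyclic
    (m : ℕ) (hm : 0 < m) (h3 : 3 ∣ m)
    (C : Submodule (ZMod 2) (Fin (2 ^ m - 1) → ZMod 2))
    (hC : ∀ c : Fin (2 ^ m - 1) → ZMod 2, c ∈ C ↔
      ((X : Polynomial (ZMod 2)) ^ (2 ^ m - 1) - 1) ∣
        (wordToPoly c * (1 + X ^ ((2 ^ m - 1) / 7) + X ^ (3 * (2 ^ m - 1) / 7)))) :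
    Module.finrank (ZMod 2) C = 3 * (2 ^ m - 1) / 7 ∧
    ∀ i : Fin (2 ^ m - 1), ∃ y : Fin 3 → (Fin (2 ^ m - 1) → ZMod 2),
      (∀ a : Fin 3, (∀ x ∈ C, ∑ j, x j * y a j = 0) ∧
          hammingNorm (y a) = 3 ∧ y a i ≠ 0) ∧
      (∀ a b : Fin 3, a ≠ b → ∀ j, y a j ≠ 0 → y b j ≠ 0 → j = i) := by
  obtain ⟨s, hs⟩ : 7 ∣ 2 ^ m - 1 := by
    obtain ⟨k, rfl⟩ := h3
    simpa [pow_mul] using Nat.sub_dvd_pow_sub_pow 8 1 k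
  have hs0 : 0 < s := by
    have := Nat.one_lt_two_pow hm.ne'
    omega
  rw [show (2 ^ m - 1) / 7 = s by omega, show 3 * (2 ^ m - 1) / 7 = 3 * s by omega] at *
  generalize 2 ^ m - 1 = n at *
  subst hs
  refine ⟨?_, isAvailableLocalAt_of_dvd hs0 C fun c hc => (hC c).mp hc⟩
  rw [finrank_cyclicCode (by omega) (monic_X_pow_add_X_pow_add_X_pow_add_one hs0)
    (X_pow_add_X_pow_add_X_pow_add_one_mul s) C hC, natDegree_one_add_X_pow_add_X_pow hs0]
end
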